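/- arXiv:2208.14204 — 6 statements merged into one kernel-verified Lean document; each statement's English description precedes it below -/
import Mathlib

section
/- Let (X,d,μ) be an α-Ahlfors regular metric measure space. Then the following are equivalent: (a) for every ξ ∈ X and all 0 ≤ r < R ≤ diam(X), the annulus closedBall(ξ,R) ∖ B(ξ,r) is nonempty; (b) μ is (α,α)-regular, i.e. there exists C' > 0 such that in addition to Ahlfors regularity, μ(closedBall(ξ,R) ∖ B(ξ,r)) ≥ (1/C')·r^α·((R−r)/r)^α for every ξ ∈ X and all 0 < r ≤ R ≤ diam(X). -/
/-!
If all annuli are nonempty, then `closedBall ξ R \ ball ξ r` contains the ball of radius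
`ρ = (R - r) / 3` around any point of the shrunken annulus `closedBall ξ (R - ρ) \ ball ξ (r + ρ)`,
and by Ahlfors regularity that ball has measure at least `ρ ^ α / C`, a constant multiple of
`(R - r) ^ α = r ^ α * ((R - r) / r) ^ α`. Conversely, for `0 < r < R` the annular lower bound is
positive, so the annulus has positive measure; for `r = 0` it contains its centre.
-/

open Metric Filter Set MeasureTheory
open scoped ENNReal Topology

noncomputable section

variable {X : Type*}

/-- `μ` is `α`-Ahlfors regular with constant `C`:
for every `0 < r ≤ diam X`, `r^α/C ≤ μ(B(ξ,r)) ≤ C·r^α`. -/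
def IsAhlforsRegularWith [MetricSpace X] [MeasurableSpace X] (μ : Measure X)
    (α C : ℝ) : Prop :=
  ∀ (ξ : X) (r : ℝ), 0 < r → ENNReal.ofReal r ≤ EMetric.diam (univ : Set X) →
    ENNReal.ofReal (r ^ α / C) ≤ μ (ball ξ r) ∧
      μ (ball ξ r) ≤ ENNReal.ofReal (C * r ^ α)

theorem Real.rpow_mul_div_rpow {a b : ℝ} (ha : 0 < a) (hb : 0 ≤ b) (α : ℝ) :
    a ^ α * (b / a) ^ α = b ^ α := by
  rw [← Real.mul_rpow ha.le (div_nonneg hb ha.le), mul_div_cancel₀ _ ha.ne']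

theorem Metric.ball_subset_closedBall_diff_ball {Y : Type*} [PseudoMetricSpace Y] {ξ η : Y}
    {r R ρ : ℝ} (hη : η ∈ closedBall ξ (R - ρ) \ ball ξ (r + ρ)) :
    ball η ρ ⊆ closedBall ξ R \ ball ξ r := by
  obtain ⟨hηR, hηr⟩ := hη
  rw [mem_closedBall] at hηR
  rw [mem_ball, not_lt] at hηr
  intro ζ hζ
  rw [mem_ball] at hζ
  refine ⟨?_, ?_⟩
  · rw [mem_closedBall]
    linarith [dist_triangle ζ η ξ]
  · rw [mem_ball, not_lt]
    linarith [dist_triangle_left η ξ ζ]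

theorem IsAhlforsRegularWith.ofReal_div_le_measure_closedBall_diff_ball
    [MetricSpace X] [MeasurableSpace X] {μ : Measure X} {α C : ℝ}
    (hreg : IsAhlforsRegularWith μ α C) {ξ : X} {r R : ℝ} (hr : 0 ≤ r) (hrR : r < R)
    (hR : ENNReal.ofReal R ≤ EMetric.diam (univ : Set X))
    (hne : (closedBall ξ (R - (R - r) / 3) \ ball ξ (r + (R - r) / 3)).Nonempty) :
    ENNReal.ofReal (((R - r) / 3) ^ α / C) ≤ μ (closedBall ξ R \ ball ξ r) := by
  obtain ⟨η, hη⟩ := hne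
  have hρ : 0 < (R - r) / 3 := by linarith
  have hρR : ENNReal.ofReal ((R - r) / 3) ≤ EMetric.diam (univ : Set X) :=
    (ENNReal.ofReal_le_ofReal (by linarith)).trans hR
  exact (hreg η _ hρ hρR).1.trans (measure_mono (ball_subset_closedBall_diff_ball hη))

theorem annuli_nonempty_iff_regular_general
    [MetricSpace X] [MeasurableSpace X]
    (μ : Measure X) (α C : ℝ) (hα : 0 < α) (hC : 0 < C)
    (hreg : IsAhlforsRegularWith μ α C) :
    (∀ (ξ : X) (r R : ℝ), 0 ≤ r → r < R →
        ENNReal.ofReal R ≤ EMetric.diam (univ : Set X) →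
        (closedBall ξ R \ ball ξ r).Nonempty) ↔
      (∃ C' : ℝ, 0 < C' ∧ ∀ (ξ : X) (r R : ℝ), 0 < r → r ≤ R →
        ENNReal.ofReal R ≤ EMetric.diam (univ : Set X) →
        ENNReal.ofReal (1 / C' * r ^ α * ((R - r) / r) ^ α) ≤
          μ (closedBall ξ R \ ball ξ r)) := by
  constructor
  · intro hne
    refine ⟨3 ^ α * C, by positivity, fun ξ r R hr hrR hR => ?_⟩
    rcases hrR.eq_or_lt with rfl | hrR
    · simp [Real.zero_rpow hα.ne']
    have hRr : 0 ≤ R - r := by linarith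
    have hconst : 1 / (3 ^ α * C) * r ^ α * ((R - r) / r) ^ α = ((R - r) / 3) ^ α / C := by
      rw [mul_assoc, Real.rpow_mul_div_rpow hr hRr, Real.div_rpow hRr (by norm_num)]
      field_simp
    rw [hconst]
    exact hreg.ofReal_div_le_measure_closedBall_diff_ball hr.le hrR hR
      (hne ξ _ _ (by linarith) (by linarith) ((ENNReal.ofReal_le_ofReal (by linarith)).trans hR))
  · rintro ⟨C', hC', hbound⟩ ξ r R hr hrR hR
    rcases hr.eq_or_lt with rfl | hr
    · exact ⟨ξ, mem_closedBall_self hrR.le, by simp⟩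
    have hpos : 0 < 1 / C' * r ^ α * ((R - r) / r) ^ α := by
      have : 0 < (R - r) / r := div_pos (sub_pos.2 hrR) hr
      positivity
    exact nonempty_of_measure_ne_zero
      ((ENNReal.ofReal_pos.2 hpos).trans_le (hbound ξ r R hr hrR.le hR)).ne'

/-- Lemma: in an `α`-Ahlfors regular space, all annuli
`closedBall(ξ,R) \ B(ξ,r)` (for `0 ≤ r < R ≤ diam X`) are nonempty if and only
if `μ` is `(α,α)`-regular, i.e. satisfies the annular lower bound
`μ(closedBall(ξ,R) \ B(ξ,r)) ≥ (1/C')·r^α·((R−r)/r)^α` for some `C' > 0`. -/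
theorem annuli_nonempty_iff_regular
    [MetricSpace X] [MeasurableSpace X] [BorelSpace X]
    (μ : Measure X) (α C : ℝ) (hα : 0 < α) (hC : 0 < C)
    (hreg : IsAhlforsRegularWith μ α C) :
    (∀ (ξ : X) (r R : ℝ), 0 ≤ r → r < R →
        ENNReal.ofReal R ≤ EMetric.diam (univ : Set X) →
        (closedBall ξ R \ ball ξ r).Nonempty) ↔
      (∃ C' : ℝ, 0 < C' ∧ ∀ (ξ : X) (r R : ℝ), 0 < r → r ≤ R →
        ENNReal.ofReal R ≤ EMetric.diam (univ : Set X) →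
        ENNReal.ofReal (1 / C' * r ^ α * ((R - r) / r) ^ α) ≤
          μ (closedBall ξ R \ ball ξ r)) :=
  annuli_nonempty_iff_regular_general μ α C hα hC hreg
end
end

section
/- Let (X,d,μ) be an α-Ahlfors regular metric measure space with constant C > 0, and suppose that for every ξ ∈ X and all 0 ≤ r < R ≤ diam(X) the annulus closedBall(ξ,R) ∖ B(ξ,r) is nonempty. Then for every ξ ∈ X and all 0 < r < R ≤ diam(X), μ(closedBall(ξ,R) ∖ B(ξ,r)) ≥ (1/(8^α·C))·r^α·((R−r)/r)^α. -/
open Metric Filter Set MeasureTheory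
open scoped ENNReal Topology

noncomputable section

variable {X : Type*}

/-- Lemma: in an `α`-Ahlfors regular space with constant `C` in which all annuli
`closedBall(ξ,R) \ B(ξ,r)` (for `0 ≤ r < R ≤ diam X`) are nonempty, one has the
annular lower bound
`μ(closedBall(ξ,R) \ B(ξ,r)) ≥ (1/(8^α·C))·r^α·((R−r)/r)^α`. -/
theorem annular_lower_bound
    [MetricSpace X] [MeasurableSpace X] [BorelSpace X]
    (μ : Measure X) (α C : ℝ) (hα : 0 < α) (hC : 0 < C)
    (hreg : IsAhlforsRegularWith μ α C)
    (hann : ∀ (ξ : X) (r R : ℝ), 0 ≤ r → r < R →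
      ENNReal.ofReal R ≤ EMetric.diam (univ : Set X) →
      (closedBall ξ R \ ball ξ r).Nonempty) :
    ∀ (ξ : X) (r R : ℝ), 0 < r → r < R →
      ENNReal.ofReal R ≤ EMetric.diam (univ : Set X) →
      ENNReal.ofReal (1 / ((8 : ℝ) ^ α * C) * r ^ α * ((R - r) / r) ^ α) ≤
        μ (closedBall ξ R \ ball ξ r) := by
  intro ξ r R hr hrR hR
  have hδ : 0 < R - r := by linarith
  set s : ℝ := (R - r) / 8 with hs_def
  have hs : 0 < s := by positivity
  obtain ⟨η, hη⟩ := hann ξ (r + s) (R - s) (by positivity)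
    (by rw [hs_def]; linarith)
    (le_trans (ENNReal.ofReal_le_ofReal (by linarith)) hR)
  have hη1 : dist η ξ ≤ R - s := hη.1
  have hη2 : r + s ≤ dist η ξ := by
    have := hη.2
    simp only [mem_ball, not_lt] at this
    exact this
  have hsub : ball η s ⊆ closedBall ξ R \ ball ξ r := by
    intro x hx
    rw [mem_ball] at hx
    constructor
    · rw [mem_closedBall]
      have := dist_triangle x η ξ
      linarith
    · simp only [mem_ball, not_lt]
      have h1 := dist_triangle η x ξ
      rw [dist_comm η x] at h1
      linarith
  have hball := (hreg η s hs (le_trans (ENNReal.ofReal_le_ofReal (by rw [hs_def]; linarith)) hR)).1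
  have heq : 1 / ((8 : ℝ) ^ α * C) * r ^ α * ((R - r) / r) ^ α = s ^ α / C := by
    have h1 : r ^ α * ((R - r) / r) ^ α = (R - r) ^ α := by
      rw [← Real.mul_rpow hr.le (by positivity)]
      congr 1
      field_simp
    have h2 : s ^ α = (R - r) ^ α / (8 : ℝ) ^ α := by
      rw [hs_def, Real.div_rpow hδ.le (by norm_num)]
    rw [mul_assoc, h1, h2]
    have h8 : (0 : ℝ) < (8 : ℝ) ^ α := Real.rpow_pos_of_pos (by norm_num) α
    field_simp
  calc ENNReal.ofReal (1 / ((8 : ℝ) ^ α * C) * r ^ α * ((R - r) / r) ^ α)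
      = ENNReal.ofReal (s ^ α / C) := by rw [heq]
    _ ≤ μ (ball η s) := hball
    _ ≤ μ (closedBall ξ R \ ball ξ r) := measure_mono hsub
end
end

section
/- Let (X,d,μ) be a proper α-Ahlfors regular metric measure space and let Q ⊆ X be a countable WDS subset with radius function R : Q → (0,∞) and constant C ≥ 1. Then for every nonempty bounded open set U ⊆ X there exist a constant C_U ≥ 1 and k_U ∈ ℕ such that for every integer k ≥ k_U there is a finite subset Q_U(k) ⊆ Q satisfying: 1/(C·k) ≤ R(ξ) ≤ C/k for all ξ ∈ Q_U(k); ⋃_{ξ∈Q_U(k)} B(ξ,R(ξ)) ⊆ U; and #Q_U(k) ≥ (1/C_U)·k^α·μ(U). -/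
open Metric Filter Set MeasureTheory
open scoped ENNReal NNReal Topology

noncomputable section

variable {X : Type*}

/-- `μ` is `(α,β)`-regular with constant `C`: Ahlfors regularity together with the
annular lower bound `μ(closedBall(ξ,R) \ B(ξ,r)) ≥ (1/C)·r^α·((R−r)/r)^β`. -/
def IsRegularMeasure [MetricSpace X] [MeasurableSpace X] (μ : Measure X)
    (α β C : ℝ) : Prop :=
  IsAhlforsRegularWith μ α C ∧
    ∀ (ξ : X) (r R : ℝ), 0 < r → r ≤ R →
      ENNReal.ofReal R ≤ EMetric.diam (univ : Set X) →
      ENNReal.ofReal (1 / C * r ^ α * ((R - r) / r) ^ β) ≤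
        μ (closedBall ξ R \ ball ξ r)

/-- `(Q, R)` is a WDS (well-separated and well-distributed) subset with constant `C`. -/
def IsWDS [MetricSpace X] [MeasurableSpace X] (μ : Measure X) (α : ℝ)
    (Q : Set X) (R : X → ℝ) (C : ℝ) : Prop :=
  1 ≤ C ∧
    (∀ ξ ∈ Q, ∀ ζ ∈ Q, ξ ≠ ζ → 1 / C * min (R ξ) (R ζ) ≤ dist ξ ζ) ∧
    ∀ (η : X) (r : ℝ), 0 < r → ∃ kB : ℕ, ∀ k : ℕ, kB ≤ k → ∃ F : Finset X,
      ↑F ⊆ Q ∧ (∀ ξ ∈ F, 1 / (C * k) ≤ R ξ ∧ R ξ ≤ C / k) ∧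
      (∀ ξ ∈ F, ball ξ (R ξ) ⊆ ball η r) ∧
      ENNReal.ofReal ((k : ℝ) ^ α / C) * μ (ball η r) ≤ (F.card : ℝ≥0∞)

/-- The set of points `ψ`-well-approximable by `(Q,R)`. -/
def WSet [MetricSpace X] (Q : Set X) (R : X → ℝ) (ψ : ℝ → ℝ) : Set X :=
  {x | {ξ | ξ ∈ Q ∧ dist x ξ < ψ (R ξ)}.Infinite}

/-- The set of points exactly `ψ`-approximable by `(Q,R)`. -/
def ESet [MetricSpace X] (Q : Set X) (R : X → ℝ) (ψ : ℝ → ℝ) : Set X :=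
  WSet Q R ψ \ ⋃ c ∈ Ioo (0 : ℝ) 1, WSet Q R fun x => c * ψ x

/-- The lower order at zero of `ψ`, `liminf_{x→0+} log ψ(x) / log x`,
as an extended nonnegative real. -/
def lowerOrderAtZero (ψ : ℝ → ℝ) : ℝ≥0∞ :=
  liminf (fun x => ENNReal.ofReal (Real.log (ψ x) / Real.log x))
    (nhdsWithin 0 (Ioi (0 : ℝ)))

/-!
A WDS family is well distributed in every ball. A nonempty open set `U` contains a ball `B`,
which has positive measure by Ahlfors regularity, while `U` itself has finite measure because
the well-distribution bound in a large ball containing `U` forces that ball to have finite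
measure. So the points found in `B` also serve for `U`, at the price of the factor
`μ U / μ B` in the constant.
-/

theorem ENNReal.exists_pos_le_and_ofReal_le {e : ℝ≥0∞} (he : e ≠ 0) {r : ℝ} (hr : 0 < r) :
    ∃ s : ℝ, 0 < s ∧ s ≤ r ∧ ENNReal.ofReal s ≤ e := by
  have hpos : 0 < min (ENNReal.ofReal r) e :=
    lt_min (ENNReal.ofReal_pos.2 hr) (pos_iff_ne_zero.2 he)
  obtain ⟨s, hs0, hsmin⟩ := ENNReal.lt_iff_exists_nnreal_btwn.1 hpos
  refine ⟨s, by exact_mod_cast hs0, ?_, ?_⟩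
  · have := (hsmin.trans_le (min_le_left _ _)).le
    rwa [← ENNReal.ofReal_coe_nnreal, ENNReal.ofReal_le_ofReal_iff hr.le] at this
  · rw [ENNReal.ofReal_coe_nnreal]
    exact (hsmin.trans_le (min_le_right _ _)).le

section

variable [MetricSpace X] [MeasurableSpace X]

def WellDistributedIn (μ : Measure X) (α : ℝ) (Q : Set X) (R : X → ℝ) (C C' : ℝ)
    (U : Set X) : Prop :=
  ∃ k_U : ℕ, ∀ k : ℕ, k_U ≤ k → ∃ F : Finset X,
    ↑F ⊆ Q ∧ (∀ ξ ∈ F, 1 / (C * k) ≤ R ξ ∧ R ξ ≤ C / k) ∧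
    (∀ ξ ∈ F, ball ξ (R ξ) ⊆ U) ∧
    ENNReal.ofReal ((k : ℝ) ^ α / C') * μ U ≤ (F.card : ℝ≥0∞)

theorem WellDistributedIn.mono {μ : Measure X} {α : ℝ} {Q : Set X} {R : X → ℝ}
    {C C' c : ℝ} {U V : Set X} (h : WellDistributedIn μ α Q R C C' V) (hVU : V ⊆ U)
    (hc : 0 < c) (hμ : μ U ≤ ENNReal.ofReal c * μ V) :
    WellDistributedIn μ α Q R C (C' * c) U := by
  obtain ⟨k_V, hk_V⟩ := h
  refine ⟨k_V, fun k hk => ?_⟩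
  obtain ⟨F, hFQ, hFR, hFV, hcard⟩ := hk_V k hk
  refine ⟨F, hFQ, hFR, fun ξ hξ => (hFV ξ hξ).trans hVU, le_trans ?_ hcard⟩
  have hfactor : (k : ℝ) ^ α / (C' * c) * c = (k : ℝ) ^ α / C' := by
    field_simp
  calc ENNReal.ofReal ((k : ℝ) ^ α / (C' * c)) * μ U
      ≤ ENNReal.ofReal ((k : ℝ) ^ α / (C' * c)) * (ENNReal.ofReal c * μ V) := by gcongr
    _ = ENNReal.ofReal ((k : ℝ) ^ α / C') * μ V := by
      rw [← mul_assoc, ← ENNReal.ofReal_mul' hc.le, hfactor]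

namespace IsWDS

variable {μ : Measure X} {α : ℝ} {Q : Set X} {R : X → ℝ} {C : ℝ}

theorem wellDistributedIn_ball (h : IsWDS μ α Q R C) (η : X) {r : ℝ} (hr : 0 < r) :
    WellDistributedIn μ α Q R C C (ball η r) :=
  h.2.2 η r hr

theorem measure_ball_lt_top (h : IsWDS μ α Q R C) (η : X) {r : ℝ} (hr : 0 < r) :
    μ (ball η r) < ∞ := by
  obtain ⟨k_B, hk_B⟩ := h.wellDistributedIn_ball η hr
  obtain ⟨F, -, -, -, hcard⟩ := hk_B (max k_B 1) (le_max_left _ _)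
  have hk : (0 : ℝ) < (max k_B 1 : ℕ) := by positivity
  have hC : 0 < C := zero_lt_one.trans_le h.1
  refine ENNReal.lt_top_of_mul_ne_top_right (ne_top_of_le_ne_top ?_ hcard) ?_
  · exact ENNReal.natCast_ne_top _
  · exact (ENNReal.ofReal_pos.2 (by positivity)).ne'

theorem measure_lt_top_of_isBounded (h : IsWDS μ α Q R C) {U : Set X}
    (hU : Bornology.IsBounded U) (η : X) : μ U < ∞ := by
  obtain ⟨r, hUr⟩ := hU.subset_ball η
  have hr : 0 < max r 1 := lt_max_of_lt_right one_pos
  calc μ U ≤ μ (ball η (max r 1)) :=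
        measure_mono (hUr.trans (ball_subset_ball (le_max_left _ _)))
    _ < ∞ := h.measure_ball_lt_top η hr

end IsWDS

theorem IsAhlforsRegularWith.measure_ball_pos {μ : Measure X} {α C : ℝ}
    (h : IsAhlforsRegularWith μ α C) (hC : 0 < C) (hμ : μ ≠ 0) (ξ : X) {r : ℝ}
    (hr : 0 < r) :
    0 < μ (ball ξ r) := by
  by_cases hd : ediam (univ : Set X) = 0
  · -- a one-point space
    have hball : ball ξ r = univ :=
      eq_univ_of_forall fun x => by
        rw [ediam_eq_zero_iff.1 hd (mem_univ x) (mem_univ ξ)]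
        exact mem_ball_self hr
    rw [hball, pos_iff_ne_zero, Ne, Measure.measure_univ_eq_zero]
    exact hμ
  · obtain ⟨s, hs, hsr, hsd⟩ := ENNReal.exists_pos_le_and_ofReal_le hd hr
    calc 0 < ENNReal.ofReal (s ^ α / C) := ENNReal.ofReal_pos.2 (by positivity)
      _ ≤ μ (ball ξ s) := (h ξ s hs hsd).1
      _ ≤ μ (ball ξ r) := measure_mono (ball_subset_ball hsr)

end

theorem wds_open_sets_general
    [MetricSpace X] [MeasurableSpace X]
    (μ : Measure X) (α C₀ : ℝ) (hC₀ : 0 < C₀)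
    (hreg : IsAhlforsRegularWith μ α C₀)
    (Q : Set X) (R : X → ℝ)
    (C : ℝ) (hWDS : IsWDS μ α Q R C) :
    ∀ U : Set X, IsOpen U → U.Nonempty → Bornology.IsBounded U →
      ∃ C_U : ℝ, 1 ≤ C_U ∧ ∃ k_U : ℕ, ∀ k : ℕ, k_U ≤ k → ∃ F : Finset X,
        ↑F ⊆ Q ∧ (∀ ξ ∈ F, 1 / (C * k) ≤ R ξ ∧ R ξ ≤ C / k) ∧
        (∀ ξ ∈ F, ball ξ (R ξ) ⊆ U) ∧
        ENNReal.ofReal ((k : ℝ) ^ α / C_U) * μ U ≤ (F.card : ℝ≥0∞) := by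
  intro U hU_open ⟨η, hη⟩ hU_bdd
  obtain ⟨ε, hε, hBU⟩ := Metric.isOpen_iff.1 hU_open η hη
  set c := max 1 (μ U / μ (ball η ε)).toReal
  have hμU : μ U ≤ ENNReal.ofReal c * μ (ball η ε) := by
    rcases eq_or_ne μ 0 with rfl | hμ
    · simp
    have hB0 := (hreg.measure_ball_pos hC₀ hμ η hε).ne'
    have hBtop := (hWDS.measure_ball_lt_top η hε).ne
    have hUtop := (hWDS.measure_lt_top_of_isBounded hU_bdd η).ne
    calc μ U = ENNReal.ofReal (μ U / μ (ball η ε)).toReal * μ (ball η ε) := by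
          rw [ENNReal.ofReal_toReal (ENNReal.div_ne_top hUtop hB0),
            ENNReal.div_mul_cancel hB0 hBtop]
      _ ≤ ENNReal.ofReal c * μ (ball η ε) := by gcongr; exact le_max_right _ _
  have hc : 1 ≤ c := le_max_left _ _
  exact ⟨C * c, one_le_mul_of_one_le_of_one_le hWDS.1 hc,
    (hWDS.wellDistributedIn_ball η hε).mono hBU (zero_lt_one.trans_le hc) hμU⟩

/-- Lemma: in a proper `α`-Ahlfors regular space, a WDS pair `(Q,R)` is
well-distributed in every nonempty bounded open set `U`, with a constant `C_U`
depending on `U`. -/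
theorem wds_open_sets
    [MetricSpace X] [ProperSpace X] [MeasurableSpace X] [BorelSpace X]
    (μ : Measure X) (α C₀ : ℝ) (hα : 0 < α) (hC₀ : 0 < C₀)
    (hreg : IsAhlforsRegularWith μ α C₀)
    (Q : Set X) (hQ : Q.Countable) (R : X → ℝ) (hR : ∀ ξ ∈ Q, 0 < R ξ)
    (C : ℝ) (hWDS : IsWDS μ α Q R C) :
    ∀ U : Set X, IsOpen U → U.Nonempty → Bornology.IsBounded U →
      ∃ C_U : ℝ, 1 ≤ C_U ∧ ∃ k_U : ℕ, ∀ k : ℕ, k_U ≤ k → ∃ F : Finset X,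
        ↑F ⊆ Q ∧ (∀ ξ ∈ F, 1 / (C * k) ≤ R ξ ∧ R ξ ≤ C / k) ∧
        (∀ ξ ∈ F, ball ξ (R ξ) ⊆ U) ∧
        ENNReal.ofReal ((k : ℝ) ^ α / C_U) * μ U ≤ (F.card : ℝ≥0∞) :=
  wds_open_sets_general μ α C₀ hC₀ hreg Q R C hWDS
end
end

section
/- Let (X,d,μ) be a proper α-Ahlfors regular metric measure space. Let K_0 ⊇ K_1 ⊇ K_2 ⊇ ⋯ be a nested decreasing sequence of subsets of X, where K_0 is a nonempty compact set and for each l ≥ 1, K_l = ⊔_{i=1}^{t_l} C_i^l is a finite disjoint union of nonempty compact sets C_1^l, …, C_{t_l}^l. Suppose: (1) for each l ≥ 1, every compact piece of K_{l−1} contains at least m_l ≥ 2 of the compact pieces of K_l; (2) the maximal diameter of the compact pieces of K_l tends to 0 as l → ∞; (3) for each l ≥ 1 there is δ_l > 0 with 0 < δ_{l+1} < δ_l such that d(C_i^l, C_j^l) ≥ δ_l for all 1 ≤ i ≠ j ≤ t_l. Then dim ⋂_{l=0}^∞ K_l ≥ α · liminf_{l→∞} log(m_1·m_2⋯m_{l−1})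 / (−log(m_l·δ_l^α)). -/
/-!
Choose inside the construction a subtree in which every chosen piece of level `l` has exactly
`m (l + 1)` chosen subpieces, so that level `l` has `m 1 ⋯ m l` chosen pieces. By Ahlfors
regularity, their disjoint `δ l / 2`-neighbourhoods give `m 1 ⋯ m l · δ l ^ α = O(1)`; hence
`δ l → 0` and the liminf is at most `1`.

Fix `θ` below the liminf and a ball of radius `ρ` with `δ (l + 1) ≤ 2ρ < δ l`. The chosen pieces
of level `l + 1` meeting it have a common parent, so there are at most `m (l + 1)` of them, and by
Ahlfors regularity at most `C (ρ / δ (l + 1)) ^ α`; interpolating between the two bounds with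
weights `1 - θ` and `θ` shows that the ball meets at most `C' ρ ^ (α θ)` times the number of all
chosen pieces of any deeper level. Counting the chosen pieces of a deep level against a finite
cover of the limit set by balls then gives `∑ ρ ^ (α θ) ≥ 1 / C'`, and compactness of the limit
set turns this into positive `α θ`-dimensional Hausdorff measure.
-/

open Metric Filter Set MeasureTheory
open scoped ENNReal Topology

noncomputable section

variable {X : Type*}

namespace IsAhlforsRegularWith

variable [MetricSpace X] [MeasurableSpace X] {μ : Measure X} {α C : ℝ}

theorem isLocallyFiniteMeasure (hμ : IsAhlforsRegularWith μ α C) {r : ℝ} (hr : 0 < r)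
    (hrX : ENNReal.ofReal r ≤ ediam (univ : Set X)) : IsLocallyFiniteMeasure μ :=
  ⟨fun x => ⟨ball x r, ball_mem_nhds x hr, (hμ x r hr hrX).2.trans_lt ENNReal.ofReal_lt_top⟩⟩

theorem card_mul_rpow_le [OpensMeasurableSpace X] (hμ : IsAhlforsRegularWith μ α C)
    (hC : 0 < C) {ι : Type*} {I : Finset ι} {S : ι → Set X} {r : ℝ} (hr : 0 < r)
    (hrX : ENNReal.ofReal r ≤ ediam (univ : Set X)) (hS : ∀ i ∈ I, (S i).Nonempty)
    (hsep : ∀ i ∈ I, ∀ j ∈ I, i ≠ j → ∀ x ∈ S i, ∀ y ∈ S j, 2 * r ≤ dist x y)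
    {U : Set X} (hU : ∀ i ∈ I, thickening r (S i) ⊆ U) (hUfin : μ U ≠ ⊤) :
    (I.card : ℝ) * r ^ α ≤ C * (μ U).toReal := by
  have hdisj : (I : Set ι).PairwiseDisjoint fun i => thickening r (S i) := by
    intro i hi j hj hij
    refine Set.disjoint_left.2 fun z hzi hzj => ?_
    obtain ⟨x, hx, hzx⟩ := mem_thickening_iff.1 hzi
    obtain ⟨y, hy, hzy⟩ := mem_thickening_iff.1 hzj
    have := hsep i hi j hj hij x hx y hy
    linarith [dist_triangle_left x y z]
  have hmeas : (I.card : ℝ≥0∞) * ENNReal.ofReal (r ^ α / C) ≤ μ U :=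
    calc (I.card : ℝ≥0∞) * ENNReal.ofReal (r ^ α / C)
        = ∑ _i ∈ I, ENNReal.ofReal (r ^ α / C) := by rw [Finset.sum_const, nsmul_eq_mul]
      _ ≤ ∑ i ∈ I, μ (thickening r (S i)) := by
        refine Finset.sum_le_sum fun i hi => ?_
        obtain ⟨x, hx⟩ := hS i hi
        exact (hμ x r hr hrX).1.trans (measure_mono (ball_subset_thickening hx r))
      _ = μ (⋃ i ∈ I, thickening r (S i)) :=
        (measure_biUnion_finset hdisj fun _ _ => isOpen_thickening.measurableSet).symm
      _ ≤ μ U := measure_mono (iUnion₂_subset hU)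
  have := ENNReal.toReal_mono hUfin hmeas
  rw [ENNReal.toReal_mul, ENNReal.toReal_natCast, ENNReal.toReal_ofReal (by positivity),
    ← mul_div_assoc, div_le_iff₀ hC] at this
  linarith

end IsAhlforsRegularWith

/-- Interpolation, with weights `1 - θ` and `θ`, between `N ≤ m` and `N ≤ B * δ ^ (-α)`. -/
theorem le_rpow_mul_mul_of_le {N m B P δ α θ : ℝ} (hN : 0 ≤ N) (hδ : 0 < δ) (hθ0 : 0 ≤ θ)
    (hθ1 : θ ≤ 1) (hNm : N ≤ m) (hNB : N * δ ^ α ≤ B) (hP : δ ^ (-(α * θ)) ≤ P * m ^ θ) :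
    N ≤ B ^ θ * (P * m) := by
  have hδα : 0 < δ ^ α := Real.rpow_pos_of_pos hδ α
  have hm : 0 ≤ m := hN.trans hNm
  have hB : 0 ≤ B := (mul_nonneg hN hδα.le).trans hNB
  have hNB' : N ≤ B * δ ^ (-α) := by
    rw [Real.rpow_neg hδ.le, ← div_eq_mul_inv, le_div_iff₀ hδα]
    exact hNB
  calc N = N ^ (1 - θ) * N ^ θ := by
        rw [← Real.rpow_add' hN (by norm_num), sub_add_cancel, Real.rpow_one]
    _ ≤ m ^ (1 - θ) * (B * δ ^ (-α)) ^ θ :=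
        mul_le_mul (Real.rpow_le_rpow hN hNm (by linarith)) (Real.rpow_le_rpow hN hNB' hθ0)
          (Real.rpow_nonneg hN θ) (Real.rpow_nonneg hm _)
    _ = m ^ (1 - θ) * (B ^ θ * δ ^ (-(α * θ))) := by
        rw [Real.mul_rpow hB (Real.rpow_nonneg hδ.le _), ← Real.rpow_mul hδ.le, neg_mul]
    _ ≤ m ^ (1 - θ) * (B ^ θ * (P * m ^ θ)) := by gcongr
    _ = B ^ θ * (P * (m ^ (1 - θ) * m ^ θ)) := by ring
    _ = B ^ θ * (P * m) := by
        rw [← Real.rpow_add' hm (by norm_num), sub_add_cancel, Real.rpow_one]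

theorem rpow_neg_le_of_lt_log_div {P m δ α θ : ℝ} (hP : 1 ≤ P) (hm : 0 < m) (hδ : 0 < δ)
    (hθ : 0 < θ) (h : θ < Real.log P / -Real.log (m * δ ^ α)) :
    δ ^ (-(α * θ)) ≤ P * m ^ θ := by
  have hlogP : 0 ≤ Real.log P := Real.log_nonneg hP
  have hden : 0 < -Real.log (m * δ ^ α) := by
    by_contra! hden
    exact (div_nonpos_of_nonneg_of_nonpos hlogP hden).not_gt (hθ.trans h)
  rw [lt_div_iff₀ hden, Real.log_mul hm.ne' (Real.rpow_pos_of_pos hδ α).ne',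
    Real.log_rpow hδ] at h
  rw [← Real.log_le_log_iff (Real.rpow_pos_of_pos hδ _)
      (mul_pos (by linarith) (Real.rpow_pos_of_pos hm θ)),
    Real.log_mul (by linarith) (Real.rpow_pos_of_pos hm θ).ne', Real.log_rpow hδ,
    Real.log_rpow hm]
  linarith

theorem tendsto_div_sub_const_atTop (b : ℝ) :
    Tendsto (fun x : ℝ => x / (x - b)) atTop (𝓝 1) := by
  have h : Tendsto (fun x : ℝ => 1 + b / (x - b)) atTop (𝓝 (1 + 0)) :=
    tendsto_const_nhds.add (tendsto_const_nhds.div_atTop (tendsto_atTop_add_const_right _ (-b)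
      tendsto_id))
  rw [add_zero] at h
  refine h.congr' ((eventually_gt_atTop b).mono fun x hx => ?_)
  field_simp [sub_ne_zero.2 hx.ne']
  ring

theorem liminf_ofReal_log_div_neg_log_le_one {a q : ℕ → ℝ} {c : ℝ}
    (ha : Tendsto a atTop atTop) (hq : ∀ᶠ l in atTop, 0 < q l ∧ a l * q l ≤ c) :
    liminf (fun l => ENNReal.ofReal (Real.log (a l) / -Real.log (q l))) atTop ≤ 1 := by
  have hy := Real.tendsto_log_atTop.comp ha
  have hlim : Tendsto (fun l => ENNReal.ofReal (Real.log (a l) / (Real.log (a l) - Real.log c)))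
      atTop (𝓝 1) := by
    simpa [Function.comp_def] using (ENNReal.continuous_ofReal.tendsto 1).comp
      ((tendsto_div_sub_const_atTop (Real.log c)).comp hy)
  refine (liminf_le_liminf ?_).trans_eq hlim.liminf_eq
  filter_upwards [hq, hy.eventually_gt_atTop (max (Real.log c) 0), ha.eventually_gt_atTop 0]
    with l ⟨hql, hac⟩ hyc ha0
  have hlog : Real.log (a l) + Real.log (q l) ≤ Real.log c := by
    rw [← Real.log_mul ha0.ne' hql.ne']
    exact Real.log_le_log (mul_pos ha0 hql) hac
  refine ENNReal.ofReal_le_ofReal (div_le_div_of_nonneg_left ?_ ?_ ?_) <;>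
    simp only [Function.comp_apply, max_lt_iff] at hyc <;> linarith

theorem exists_le_and_succ_le_and_lt {δ : ℕ → ℝ} {d : ℝ} {l₀ : ℕ} (h₀ : d < δ l₀)
    (h : ∃ l, l₀ < l ∧ δ l ≤ d) : ∃ l, l₀ ≤ l ∧ δ (l + 1) ≤ d ∧ d < δ l := by
  classical
  obtain ⟨hlt, hle⟩ := Nat.find_spec h
  obtain ⟨k, hk⟩ := Nat.exists_eq_add_of_lt hlt
  refine ⟨l₀ + k, le_self_add, hk ▸ hle, ?_⟩
  rcases k.eq_zero_or_pos with rfl | hk0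
  · simpa using h₀
  · have := Nat.find_min h (show l₀ + k < Nat.find h by omega)
    simp only [not_and, not_le] at this
    exact this (by omega)

theorem tendsto_prod_Icc_atTop {m : ℕ → ℕ} (hm : ∀ l, 1 ≤ l → 2 ≤ m l) :
    Tendsto (fun l => ∏ k ∈ Finset.Icc 1 l, (m k : ℝ)) atTop atTop := by
  refine tendsto_atTop_mono (fun l => ?_) (tendsto_pow_atTop_atTop_of_one_lt one_lt_two)
  have := Finset.pow_card_le_prod (Finset.Icc 1 l) m 2 fun k hk => hm k (Finset.mem_Icc.1 hk).1
  rw [Nat.card_Icc, add_tsub_cancel_right] at this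
  exact_mod_cast this

theorem tendsto_zero_of_mul_rpow_le {P δ : ℕ → ℝ} {α M : ℝ} (hα : 0 < α)
    (hP : Tendsto P atTop atTop) (hδ : ∀ᶠ l in atTop, 0 ≤ δ l)
    (hM : ∀ᶠ l in atTop, P l * δ l ^ α ≤ M) : Tendsto δ atTop (𝓝 0) := by
  refine tendsto_order.2 ⟨fun a ha => hδ.mono fun l h => ha.trans_le h, fun d hd => ?_⟩
  filter_upwards [hP.eventually_gt_atTop (M / d ^ α), hP.eventually_gt_atTop 0, hδ, hM]
    with l hPM hP0 hδl hMl
  rw [div_lt_iff₀ (Real.rpow_pos_of_pos hd α)] at hPM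
  rw [← Real.rpow_lt_rpow_iff hδl hd.le hα]
  exact lt_of_mul_lt_mul_left (hMl.trans_lt hPM) hP0.le

theorem prod_Icc_one_add_eq_mul_prod_Ioc {M : Type*} [CommMonoid M] (f : ℕ → M) (l k : ℕ) :
    ∏ i ∈ Finset.Icc 1 (l + k), f i =
      (∏ i ∈ Finset.Icc 1 l, f i) * ∏ i ∈ Finset.Ioc l (l + k), f i := by
  have hIcc : ∀ n, Finset.Icc 1 n = Finset.Ioc 0 n := fun n => by
    simpa using Finset.Icc_add_one_left_eq_Ioc 0 n
  rw [hIcc, hIcc, Finset.prod_Ioc_consecutive _ (Nat.zero_le l) (Nat.le_add_right l k)]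

theorem exists_pos_le_rpow_add_lt {D s η r : ℝ} (hs : 0 < s) (hη : 0 < η) (hr : 0 < r) :
    ∃ ρ, 0 < ρ ∧ ρ ≤ r ∧ (D + ρ) ^ s < D ^ s + η := by
  have hcont : ContinuousAt (fun ρ : ℝ => (D + ρ) ^ s) 0 :=
    (continuous_const.add continuous_id).continuousAt.rpow_const (Or.inr hs.le)
  have hlt : ∀ᶠ ρ in 𝓝 (0 : ℝ), (D + ρ) ^ s < D ^ s + η :=
    hcont.eventually (gt_mem_nhds (by simpa using hη))
  obtain ⟨ρ, hρ, hρr⟩ := ((hlt.filter_mono nhdsWithin_le_nhds).and (Ioc_mem_nhdsGT hr)).exists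
  exact ⟨ρ, hρr.1, hρr.2, hρ⟩

section HausdorffDimension

variable [MetricSpace X] {F : Set X} {s ε r : ℝ}

theorem exists_subset_ball_diam_add {T : Set X} (hT : ediam T ≠ ⊤) (x₀ : X) {ρ : ℝ}
    (hρ : 0 < ρ) : ∃ x, T ⊆ ball x (diam T + ρ) := by
  rcases T.eq_empty_or_nonempty with rfl | ⟨y, hy⟩
  · exact ⟨x₀, empty_subset _⟩
  · refine ⟨y, fun z hz => mem_ball.2 ?_⟩
    linarith [dist_le_diam_of_mem' hT hz hy]

theorem ofReal_diam_rpow_le_iSup {T : Set X} (hT : ediam T ≠ ⊤) (hs : 0 < s) :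
    ENNReal.ofReal (diam T ^ s) ≤ ⨆ _ : T.Nonempty, ediam T ^ s := by
  rcases T.eq_empty_or_nonempty with rfl | hTn
  · simp [Real.zero_rpow hs.ne']
  · rw [← ENNReal.ofReal_rpow_of_nonneg diam_nonneg hs.le, diam, ENNReal.ofReal_toReal hT]
    exact le_iSup_of_le hTn le_rfl

/-- Enlarging the members of a countable cover to open balls and extracting a finite subcover
costs an arbitrarily small amount of `∑ diam ^ s`. -/
theorem ofReal_half_le_tsum_of_finite_ball_cover (hF : IsCompact F) (hs : 0 < s) (hε : 0 < ε)
    (hr : 0 < r)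
    (h : ∀ B : Finset (X × ℝ), (∀ p ∈ B, 0 < p.2 ∧ p.2 ≤ r) →
      F ⊆ ⋃ p ∈ B, ball p.1 p.2 → ε ≤ ∑ p ∈ B, p.2 ^ s)
    {T : ℕ → Set X} (hT : F ⊆ ⋃ n, T n) (hTr : ∀ n, ediam (T n) ≤ ENNReal.ofReal (r / 2)) :
    ENNReal.ofReal (ε / 2) ≤ ∑' n, ⨆ _ : (T n).Nonempty, ediam (T n) ^ s := by
  classical
  obtain ⟨x₀, -⟩ : F.Nonempty := by
    by_contra hF0
    have := h ∅ (by simp) (by simpa [not_nonempty_iff_eq_empty] using hF0)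
    simp only [Finset.sum_empty] at this
    linarith
  have hTfin : ∀ n, ediam (T n) ≠ ⊤ := fun n => ne_top_of_le_ne_top ENNReal.ofReal_ne_top (hTr n)
  obtain ⟨η, hη, hηε⟩ := ENNReal.exists_pos_sum_of_countable
    (ENNReal.ofReal_pos.2 (half_pos hε)).ne' ℕ
  choose ρ hρ using fun n => exists_pos_le_rpow_add_lt (D := diam (T n)) hs (hη n) (half_pos hr)
  choose x hx using fun n => exists_subset_ball_diam_add (hTfin n) x₀ (hρ n).1
  have hR : ∀ n, 0 < diam (T n) + ρ n ∧ diam (T n) + ρ n ≤ r := fun n => by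
    have hTn : diam (T n) ≤ r / 2 := ENNReal.toReal_le_of_le_ofReal (by positivity) (hTr n)
    exact ⟨add_pos_of_nonneg_of_pos diam_nonneg (hρ n).1, by linarith [(hρ n).2.1]⟩
  obtain ⟨J, hJ⟩ := hF.elim_finite_subcover (fun n => ball (x n) (diam (T n) + ρ n))
    (fun _ => isOpen_ball) (hT.trans (iUnion_mono hx))
  have hsum : ε ≤ ∑ n ∈ J, (diam (T n) + ρ n) ^ s := by
    refine (h (J.image fun n => (x n, diam (T n) + ρ n)) ?_ ?_).trans
      (Finset.sum_image_le_of_nonneg fun p hp => ?_)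
    · simp only [Finset.mem_image, forall_exists_index, and_imp]
      rintro _ n - rfl
      exact hR n
    · simpa [Finset.set_biUnion_finset_image] using hJ
    · obtain ⟨n, -, rfl⟩ := Finset.mem_image.1 hp
      exact Real.rpow_nonneg (hR n).1.le s
  refine ENNReal.le_of_add_le_add_right (ENNReal.ofReal_ne_top (r := ε / 2)) ?_
  calc ENNReal.ofReal (ε / 2) + ENNReal.ofReal (ε / 2) = ENNReal.ofReal ε := by
        rw [← ENNReal.ofReal_add (by positivity) (by positivity), add_halves]
    _ ≤ ∑ n ∈ J, ENNReal.ofReal ((diam (T n) + ρ n) ^ s) := by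
        rw [← ENNReal.ofReal_sum_of_nonneg fun n _ => Real.rpow_nonneg (hR n).1.le s]
        exact ENNReal.ofReal_le_ofReal hsum
    _ ≤ ∑ n ∈ J, (ENNReal.ofReal (diam (T n) ^ s) + η n) := by
        refine Finset.sum_le_sum fun n _ => (ENNReal.ofReal_le_ofReal (hρ n).2.2.le).trans ?_
        exact ENNReal.ofReal_add_le.trans_eq (congrArg _ ENNReal.ofReal_coe_nnreal)
    _ ≤ (∑' n, ⨆ _ : (T n).Nonempty, ediam (T n) ^ s) + ∑' n, (η n : ℝ≥0∞) := by
        rw [Finset.sum_add_distrib]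
        refine add_le_add ((Finset.sum_le_sum fun n _ => ?_).trans (ENNReal.sum_le_tsum J))
          (ENNReal.sum_le_tsum J)
        exact ofReal_diam_rpow_le_iSup (hTfin n) hs
    _ ≤ _ := by gcongr

theorem le_dimH_of_forall_finite_ball_cover (hF : IsCompact F) (hs : 0 < s) (hε : 0 < ε)
    (hr : 0 < r) (h : ∀ B : Finset (X × ℝ), (∀ p ∈ B, 0 < p.2 ∧ p.2 ≤ r) →
      F ⊆ ⋃ p ∈ B, ball p.1 p.2 → ε ≤ ∑ p ∈ B, p.2 ^ s) :
    ENNReal.ofReal s ≤ dimH F := by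
  borelize X
  have hμH : ENNReal.ofReal (ε / 2) ≤ μH[s] F := by
    rw [Measure.hausdorffMeasure_apply]
    refine le_iSup₂_of_le (ENNReal.ofReal (r / 2)) (ENNReal.ofReal_pos.2 (half_pos hr)) ?_
    exact le_iInf₂ fun T hT => le_iInf fun hTr =>
      ofReal_half_le_tsum_of_finite_ball_cover hF hs hε hr h hT hTr
  have hne : μH[(s.toNNReal : ℝ)] F ≠ 0 := by
    rw [Real.coe_toNNReal _ hs.le]
    exact ((ENNReal.ofReal_pos.2 (half_pos hε)).trans_le hμH).ne'
  exact le_dimH_of_hausdorffMeasure_ne_zero hne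

end HausdorffDimension

section Subpieces

variable {t m : ℕ → ℕ} {Cp : ℕ → ℕ → Set X}

structure SubpieceChoice (t m : ℕ → ℕ) (Cp : ℕ → ℕ → Set X) where
  sub : ℕ → ℕ → Finset ℕ
  card_sub : ∀ l, ∀ j < t l, (sub l j).card = m (l + 1)
  lt_of_mem_sub : ∀ l, ∀ j < t l, ∀ i ∈ sub l j, i < t (l + 1)
  subset_of_mem_sub : ∀ l, ∀ j < t l, ∀ i ∈ sub l j, Cp (l + 1) i ⊆ Cp l j

theorem SubpieceChoice.nonempty_of_le_ncard
    (h : ∀ l, ∀ j < t l, m (l + 1) ≤ {i | i < t (l + 1) ∧ Cp (l + 1) i ⊆ Cp l j}.ncard) :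
    Nonempty (SubpieceChoice t m Cp) := by
  have hsub : ∀ l j, ∃ s : Finset ℕ, j < t l →
      s.card = m (l + 1) ∧ ∀ i ∈ s, i < t (l + 1) ∧ Cp (l + 1) i ⊆ Cp l j := by
    intro l j
    by_cases hj : j < t l
    · have hfin : {i | i < t (l + 1) ∧ Cp (l + 1) i ⊆ Cp l j}.Finite :=
        (finite_Iio (t (l + 1))).subset fun i hi => hi.1
      have hcard := h l j hj
      rw [ncard_eq_toFinset_card _ hfin] at hcard
      obtain ⟨s, hs, hscard⟩ := Finset.exists_subset_card_eq hcard
      exact ⟨s, fun _ => ⟨hscard, fun i hi => by simpa using hs hi⟩⟩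
    · exact ⟨∅, fun h => absurd h hj⟩
  choose sub hsub using hsub
  exact ⟨⟨sub, fun l j hj => (hsub l j hj).1, fun l j hj i hi => ((hsub l j hj).2 i hi).1,
    fun l j hj i hi => ((hsub l j hj).2 i hi).2⟩⟩

namespace SubpieceChoice

variable (c : SubpieceChoice t m Cp)

/-- The chosen descendants of the piece `Cp l j` at level `l + k`. -/
def desc (l j : ℕ) : ℕ → Finset ℕ
  | 0 => {j}
  | k + 1 => (desc l j k).biUnion (c.sub (l + k))

abbrev level (l : ℕ) : Finset ℕ := c.desc 0 0 l

open Classical in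
def levelMeeting (l : ℕ) (V : Set X) : Finset ℕ :=
  (c.level l).filter fun i => (Cp l i ∩ V).Nonempty

theorem mem_levelMeeting {l i : ℕ} {V : Set X} :
    i ∈ c.levelMeeting l V ↔ i ∈ c.level l ∧ (Cp l i ∩ V).Nonempty := by
  simp [levelMeeting]

theorem desc_spec {l j : ℕ} (hj : j < t l) :
    ∀ k, ∀ i ∈ c.desc l j k, i < t (l + k) ∧ Cp (l + k) i ⊆ Cp l j
  | 0, i, hi => by
    rw [desc, Finset.mem_singleton] at hi
    subst hi
    exact ⟨hj, subset_rfl⟩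
  | k + 1, i, hi => by
    obtain ⟨p, hp, hip⟩ := Finset.mem_biUnion.1 hi
    obtain ⟨hpt, hpj⟩ := desc_spec hj k p hp
    exact ⟨c.lt_of_mem_sub _ p hpt i hip, (c.subset_of_mem_sub _ p hpt i hip).trans hpj⟩

theorem desc_add (l j k : ℕ) :
    ∀ k', c.desc l j (k + k') = (c.desc l j k).biUnion fun i => c.desc (l + k) i k'
  | 0 => by simp [desc]
  | k' + 1 => by
    rw [← add_assoc, desc, desc_add l j k k', Finset.biUnion_biUnion]
    simp only [desc, add_assoc]

theorem level_add (l k : ℕ) : c.level (l + k) = (c.level l).biUnion fun i => c.desc l i k := by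
  simpa using c.desc_add 0 0 l k

theorem card_desc (hne : ∀ l, ∀ i < t l, (Cp l i).Nonempty)
    (hdisj : ∀ l, ∀ i < t l, ∀ j < t l, i ≠ j → Disjoint (Cp l i) (Cp l j)) {l j : ℕ}
    (hj : j < t l) : ∀ k, (c.desc l j k).card = ∏ i ∈ Finset.Ioc l (l + k), m i
  | 0 => by simp [desc]
  | k + 1 => by
    have hsub_disj : ((c.desc l j k : Set ℕ)).PairwiseDisjoint (c.sub (l + k)) := by
      intro p hp p' hp' hpp'
      have hpt := (c.desc_spec hj k p hp).1
      have hpt' := (c.desc_spec hj k p' hp').1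
      refine Finset.disjoint_left.2 fun i hi hi' => ?_
      obtain ⟨x, hx⟩ := hne _ i (c.lt_of_mem_sub _ p hpt i hi)
      exact (hdisj _ p hpt p' hpt' hpp').ne_of_mem (c.subset_of_mem_sub _ p hpt i hi hx)
        (c.subset_of_mem_sub _ p' hpt' i hi' hx) rfl
    rw [desc, Finset.card_biUnion hsub_disj,
      Finset.sum_congr rfl fun p hp => c.card_sub _ p (c.desc_spec hj k p hp).1,
      Finset.sum_const, smul_eq_mul, card_desc hne hdisj hj k, ← add_assoc,
      Finset.prod_Ioc_succ_top (Nat.le_add_right l k)]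

theorem level_spec (h0 : 0 < t 0) {l i : ℕ} (hi : i ∈ c.level l) :
    i < t l ∧ Cp l i ⊆ Cp 0 0 := by
  simpa using c.desc_spec h0 l i hi

theorem level_succ (l : ℕ) : c.level (l + 1) = (c.level l).biUnion (c.sub l) := by
  rw [level, desc, zero_add]

theorem card_level (hne : ∀ l, ∀ i < t l, (Cp l i).Nonempty)
    (hdisj : ∀ l, ∀ i < t l, ∀ j < t l, i ≠ j → Disjoint (Cp l i) (Cp l j)) (h0 : 0 < t 0)
    (l : ℕ) : (c.level l).card = ∏ i ∈ Finset.Icc 1 l, m i := by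
  simpa [← Finset.Icc_add_one_left_eq_Ioc] using c.card_desc hne hdisj h0 l

theorem card_levelMeeting_add_le (hne : ∀ l, ∀ i < t l, (Cp l i).Nonempty)
    (hdisj : ∀ l, ∀ i < t l, ∀ j < t l, i ≠ j → Disjoint (Cp l i) (Cp l j)) (h0 : 0 < t 0)
    (V : Set X) (l k : ℕ) :
    (c.levelMeeting (l + k) V).card ≤
      (c.levelMeeting l V).card * ∏ i ∈ Finset.Ioc l (l + k), m i := by
  have hsub : c.levelMeeting (l + k) V ⊆ (c.levelMeeting l V).biUnion fun j => c.desc l j k := by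
    intro i hi
    obtain ⟨hi, x, hxi, hxV⟩ := c.mem_levelMeeting.1 hi
    rw [level_add] at hi
    obtain ⟨j, hj, hij⟩ := Finset.mem_biUnion.1 hi
    have hjt := (c.level_spec h0 hj).1
    exact Finset.mem_biUnion.2 ⟨j, c.mem_levelMeeting.2
      ⟨hj, x, (c.desc_spec hjt k i hij).2 hxi, hxV⟩, hij⟩
  calc _ ≤ _ := Finset.card_le_card hsub
    _ ≤ _ := Finset.card_biUnion_le
    _ = _ := by
      rw [Finset.sum_congr rfl fun j hj => c.card_desc hne hdisj
        (c.level_spec h0 (c.mem_levelMeeting.1 hj).1).1 k, Finset.sum_const, smul_eq_mul]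

theorem card_levelMeeting_succ_le [MetricSpace X] (h0 : 0 < t 0) {l : ℕ} {r : ℝ}
    (hsep : ∀ i < t l, ∀ j < t l, i ≠ j → ∀ x ∈ Cp l i, ∀ y ∈ Cp l j, r ≤ dist x y)
    {V : Set X} (hV : ∀ x ∈ V, ∀ y ∈ V, dist x y < r) :
    (c.levelMeeting (l + 1) V).card ≤ m (l + 1) := by
  rcases (c.levelMeeting (l + 1) V).eq_empty_or_nonempty with h | ⟨i₀, hi₀⟩
  · simp [h]
  have hparent : ∀ i ∈ c.levelMeeting (l + 1) V,
      ∃ p ∈ c.level l, i ∈ c.sub l p ∧ ∃ x ∈ Cp l p, x ∈ V := by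
    intro i hi
    obtain ⟨hi, x, hxi, hxV⟩ := c.mem_levelMeeting.1 hi
    rw [level_succ] at hi
    obtain ⟨p, hp, hip⟩ := Finset.mem_biUnion.1 hi
    exact ⟨p, hp, hip, x, c.subset_of_mem_sub l p (c.level_spec h0 hp).1 i hip hxi, hxV⟩
  obtain ⟨p₀, hp₀, -, x₀, hx₀, hx₀V⟩ := hparent i₀ hi₀
  calc _ ≤ (c.sub l p₀).card := Finset.card_le_card fun i hi => by
        obtain ⟨p, hp, hip, x, hx, hxV⟩ := hparent i hi
        obtain rfl : p = p₀ := by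
          by_contra hpp₀
          exact (hV x hxV x₀ hx₀V).not_ge (hsep p (c.level_spec h0 hp).1 p₀
            (c.level_spec h0 hp₀).1 hpp₀ x hx x₀ hx₀)
        exact hip
    _ = m (l + 1) := c.card_sub l p₀ (c.level_spec h0 hp₀).1

end SubpieceChoice

end Subpieces

section Levels

variable [MetricSpace X] {t : ℕ → ℕ} {Cp : ℕ → ℕ → Set X}

theorem isCompact_biUnion_range (hcpt : ∀ l, ∀ i < t l, IsCompact (Cp l i)) (l : ℕ) :
    IsCompact (⋃ i ∈ Finset.range (t l), Cp l i) :=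
  (Finset.range (t l)).isCompact_biUnion fun i hi => hcpt l i (Finset.mem_range.1 hi)

theorem nonempty_inter_iInter_biUnion_range (hne : ∀ l, ∀ i < t l, (Cp l i).Nonempty)
    (hcpt : ∀ l, ∀ i < t l, IsCompact (Cp l i))
    (hnested : ∀ l, (⋃ i ∈ Finset.range (t (l + 1)), Cp (l + 1) i) ⊆
      ⋃ i ∈ Finset.range (t l), Cp l i)
    (hsub : ∀ l, ∀ j < t l, ∃ i < t (l + 1), Cp (l + 1) i ⊆ Cp l j) {l j : ℕ} (hj : j < t l) :
    (Cp l j ∩ ⋂ L, ⋃ i ∈ Finset.range (t L), Cp L i).Nonempty := by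
  have hdesc : ∀ k, ∃ i < t (l + k), Cp (l + k) i ⊆ Cp l j := by
    intro k
    induction k with
    | zero => exact ⟨j, hj, subset_rfl⟩
    | succ k ih =>
      obtain ⟨i, hi, hij⟩ := ih
      obtain ⟨i', hi', hi'i⟩ := hsub _ i hi
      exact ⟨i', hi', hi'i.trans hij⟩
  set G : ℕ → Set X := fun k => Cp l j ∩ ⋃ i ∈ Finset.range (t (l + k)), Cp (l + k) i
  have hG_cpt : ∀ k, IsCompact (G k) := fun k =>
    (hcpt l j hj).inter_right (isCompact_biUnion_range hcpt _).isClosed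
  have hG_ne : ∀ k, (G k).Nonempty := fun k => by
    obtain ⟨i, hi, hij⟩ := hdesc k
    obtain ⟨x, hx⟩ := hne _ i hi
    exact ⟨x, hij hx, mem_biUnion (Finset.mem_range.2 hi) hx⟩
  obtain ⟨x, hx⟩ := IsCompact.nonempty_iInter_of_sequence_nonempty_isCompact_isClosed G
    (fun k => inter_subset_inter_right _ (hnested _)) hG_ne (hG_cpt 0) fun k => (hG_cpt k).isClosed
  rw [mem_iInter] at hx
  exact ⟨x, (hx 0).1, mem_iInter.2 fun L =>
    antitone_nat_of_succ_le (f := fun L => ⋃ i ∈ Finset.range (t L), Cp L i) hnested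
      (Nat.le_add_left L l) (hx L).2⟩

end Levels

structure IsCantorScheme [MetricSpace X] (t m : ℕ → ℕ) (Cp : ℕ → ℕ → Set X) (δ : ℕ → ℝ) :
    Prop where
  t_zero : t 0 = 1
  nonempty : ∀ l, ∀ i < t l, (Cp l i).Nonempty
  isCompact : ∀ l, ∀ i < t l, IsCompact (Cp l i)
  nested : ∀ l, (⋃ i ∈ Finset.range (t (l + 1)), Cp (l + 1) i) ⊆ ⋃ i ∈ Finset.range (t l), Cp l i
  two_le_m : ∀ l, 1 ≤ l → 2 ≤ m l
  m_le_ncard : ∀ l, ∀ j < t l,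
    m (l + 1) ≤ {i | i < t (l + 1) ∧ Cp (l + 1) i ⊆ Cp l j}.ncard
  δ_pos : ∀ l, 1 ≤ l → 0 < δ l
  δ_succ_lt : ∀ l, 1 ≤ l → δ (l + 1) < δ l
  le_dist : ∀ l, 1 ≤ l → ∀ i < t l, ∀ j < t l, i ≠ j → ∀ x ∈ Cp l i, ∀ y ∈ Cp l j, δ l ≤ dist x y

namespace IsCantorScheme

variable [MetricSpace X] {t m : ℕ → ℕ} {Cp : ℕ → ℕ → Set X} {δ : ℕ → ℝ} {α : ℝ}

theorem t_pos (hK : IsCantorScheme t m Cp δ) : 0 < t 0 := by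
  rw [hK.t_zero]
  exact one_pos

theorem m_succ_pos (hK : IsCantorScheme t m Cp δ) (l : ℕ) : 0 < m (l + 1) :=
  zero_lt_two.trans_le (hK.two_le_m _ (Nat.le_add_left 1 l))

theorem exists_subpiece (hK : IsCantorScheme t m Cp δ) :
    ∀ l, ∀ j < t l, ∃ i < t (l + 1), Cp (l + 1) i ⊆ Cp l j := fun l j hj =>
  Set.nonempty_of_ncard_ne_zero ((hK.m_succ_pos l).trans_le (hK.m_le_ncard l j hj)).ne'

theorem disjoint (hK : IsCantorScheme t m Cp δ) :
    ∀ l, ∀ i < t l, ∀ j < t l, i ≠ j → Disjoint (Cp l i) (Cp l j)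
  | 0, i, hi, j, hj, hij => by
    rw [hK.t_zero] at hi hj
    omega
  | l + 1, i, hi, j, hj, hij => Set.disjoint_left.2 fun x hxi hxj =>
    (hK.δ_pos _ (Nat.le_add_left 1 l)).not_ge
      (by simpa using hK.le_dist _ (Nat.le_add_left 1 l) i hi j hj hij x hxi x hxj)

theorem δ_le_δ_one (hK : IsCantorScheme t m Cp δ) {l : ℕ} (hl : 1 ≤ l) : δ l ≤ δ 1 :=
  antitoneOn_nat_Ici_of_succ_le (fun l hl => (hK.δ_succ_lt l hl).le) (le_refl 1) hl hl

theorem ofReal_δ_one_le_ediam (hK : IsCantorScheme t m Cp δ) :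
    ENNReal.ofReal (δ 1) ≤ ediam (univ : Set X) := by
  obtain ⟨c⟩ := SubpieceChoice.nonempty_of_le_ncard hK.m_le_ncard
  have h0 := hK.t_pos
  have hcard : 1 < (c.sub 0 0).card := by
    rw [c.card_sub 0 0 h0]
    exact hK.two_le_m 1 le_rfl
  obtain ⟨i, hi, j, hj, hij⟩ := Finset.one_lt_card.1 hcard
  have hit := c.lt_of_mem_sub 0 0 h0 i hi
  have hjt := c.lt_of_mem_sub 0 0 h0 j hj
  obtain ⟨x, hx⟩ := hK.nonempty 1 i hit
  obtain ⟨y, hy⟩ := hK.nonempty 1 j hjt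
  calc ENNReal.ofReal (δ 1) ≤ ENNReal.ofReal (dist x y) :=
        ENNReal.ofReal_le_ofReal (hK.le_dist 1 le_rfl i hit j hjt hij x hx y hy)
    _ = edist x y := (edist_dist x y).symm
    _ ≤ ediam univ := edist_le_ediam_of_mem (mem_univ x) (mem_univ y)

theorem isCompact_iInter (hK : IsCantorScheme t m Cp δ) :
    IsCompact (⋂ l, ⋃ i ∈ Finset.range (t l), Cp l i) := by
  have hKl := isCompact_biUnion_range hK.isCompact
  exact (hKl 0).of_isClosed_subset (isClosed_iInter fun l => (hKl l).isClosed) (iInter_subset _ 0)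

theorem one_le_prod (hK : IsCantorScheme t m Cp δ) (l : ℕ) :
    1 ≤ ∏ i ∈ Finset.Icc 1 l, (m i : ℝ) :=
  Finset.one_le_prod fun i hi =>
    Nat.one_le_cast.2 (one_le_two.trans (hK.two_le_m i (Finset.mem_Icc.1 hi).1))

theorem liminf_le_one (hK : IsCantorScheme t m Cp δ) {M : ℝ}
    (hM : ∀ l, 1 ≤ l → (∏ k ∈ Finset.Icc 1 l, (m k : ℝ)) * δ l ^ α ≤ M) :
    liminf (fun l : ℕ => ENNReal.ofReal (Real.log (∏ k ∈ Finset.Icc 1 (l - 1), (m k : ℝ)) /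
      (- Real.log ((m l : ℝ) * δ l ^ α)))) atTop ≤ 1 := by
  refine liminf_ofReal_log_div_neg_log_le_one (c := M)
    ((tendsto_prod_Icc_atTop hK.two_le_m).comp (tendsto_sub_atTop_nat 1))
    (eventually_atTop.2 ⟨1, fun l hl => ⟨mul_pos ?_ (Real.rpow_pos_of_pos (hK.δ_pos l hl) α), ?_⟩⟩)
  · exact Nat.cast_pos.2 (zero_lt_two.trans_le (hK.two_le_m l hl))
  · obtain ⟨l, rfl⟩ := Nat.exists_eq_add_of_le' hl
    simpa [Finset.prod_Icc_succ_top (Nat.le_add_left 1 l), mul_assoc] using hM (l + 1) hl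

theorem exists_rpow_neg_le (hK : IsCantorScheme t m Cp δ) {θ : ℝ} (hθ : 0 < θ)
    (h : ENNReal.ofReal θ < liminf (fun l : ℕ => ENNReal.ofReal
      (Real.log (∏ k ∈ Finset.Icc 1 (l - 1), (m k : ℝ)) / (- Real.log ((m l : ℝ) * δ l ^ α))))
      atTop) :
    ∃ l₀, 1 ≤ l₀ ∧ ∀ l, l₀ ≤ l →
      δ (l + 1) ^ (-(α * θ)) ≤ (∏ i ∈ Finset.Icc 1 l, (m i : ℝ)) * m (l + 1) ^ θ := by
  obtain ⟨L, hL⟩ := eventually_atTop.1 (eventually_lt_of_lt_liminf h)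
  refine ⟨max L 1, le_max_right L 1, fun l hl => ?_⟩
  have hlt := hL (l + 1) (by omega)
  rw [Nat.add_sub_cancel, ENNReal.ofReal_lt_ofReal_iff'] at hlt
  exact rpow_neg_le_of_lt_log_div (hK.one_le_prod l) (Nat.cast_pos.2 (hK.m_succ_pos l))
    (hK.δ_pos _ (Nat.le_add_left 1 l)) hθ hlt.1

theorem card_level_le_sum (hK : IsCantorScheme t m Cp δ) (c : SubpieceChoice t m Cp) (L : ℕ)
    {ι : Type*} (B : Finset ι) (V : ι → Set X)
    (hcover : (⋂ l, ⋃ i ∈ Finset.range (t l), Cp l i) ⊆ ⋃ p ∈ B, V p) :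
    (c.level L).card ≤ ∑ p ∈ B, (c.levelMeeting L (V p)).card := by
  refine (Finset.card_le_card fun i hi => ?_).trans Finset.card_biUnion_le
  obtain ⟨x, hxi, hxF⟩ := nonempty_inter_iInter_biUnion_range hK.nonempty hK.isCompact hK.nested
    hK.exists_subpiece (c.level_spec hK.t_pos hi).1
  obtain ⟨p, hp, hxp⟩ := mem_iUnion₂.1 (hcover hxF)
  exact Finset.mem_biUnion.2 ⟨p, hp, c.mem_levelMeeting.2 ⟨hi, x, hxi, hxp⟩⟩

section Measure

variable [MeasurableSpace X] [OpensMeasurableSpace X] {μ : Measure X} {C : ℝ}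

theorem exists_prod_mul_rpow_le [ProperSpace X] (hK : IsCantorScheme t m Cp δ)
    (hμ : IsAhlforsRegularWith μ α C) (hC : 0 < C) :
    ∃ M, ∀ l, 1 ≤ l → (∏ k ∈ Finset.Icc 1 l, (m k : ℝ)) * δ l ^ α ≤ M := by
  obtain ⟨c⟩ := SubpieceChoice.nonempty_of_le_ncard hK.m_le_ncard
  have h0 := hK.t_pos
  have hX := hK.ofReal_δ_one_le_ediam
  have := hμ.isLocallyFiniteMeasure (hK.δ_pos 1 le_rfl) hX
  set U := cthickening (δ 1) (Cp 0 0)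
  have hU : μ U ≠ ⊤ := (hK.isCompact 0 0 h0).cthickening.measure_lt_top.ne
  refine ⟨2 ^ α * (C * (μ U).toReal), fun l hl => ?_⟩
  have hδl := hK.δ_pos l hl
  have hδl1 := hK.δ_le_δ_one hl
  have hpack := hμ.card_mul_rpow_le hC (I := c.level l) (S := Cp l) (half_pos hδl)
    ((ENNReal.ofReal_le_ofReal (by linarith)).trans hX)
    (fun i hi => hK.nonempty l i (c.level_spec h0 hi).1)
    (fun i hi j hj hij => by
      rw [mul_div_cancel₀ _ two_ne_zero]
      exact hK.le_dist l hl i (c.level_spec h0 hi).1 j (c.level_spec h0 hj).1 hij)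
    (fun i hi => ((thickening_mono (by linarith : δ l / 2 ≤ δ 1) _).trans
      (thickening_subset_of_subset _ (c.level_spec h0 hi).2)).trans
        (thickening_subset_cthickening _ _))
    hU
  rw [c.card_level hK.nonempty hK.disjoint h0, Real.div_rpow hδl.le zero_le_two, mul_div_assoc',
    div_le_iff₀ (Real.rpow_pos_of_pos two_pos α)] at hpack
  push_cast at hpack
  linarith

theorem card_levelMeeting_succ_mul_rpow_le (hK : IsCantorScheme t m Cp δ)
    (c : SubpieceChoice t m Cp) (hμ : IsAhlforsRegularWith μ α C) (hC : 0 < C) {l : ℕ}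
    (hl : 1 ≤ l) {y : X} {ρ : ℝ} (hρl1 : δ (l + 1) ≤ 2 * ρ) (hρl : 2 * ρ < δ l) :
    ((c.levelMeeting (l + 1) (ball y ρ)).card : ℝ) * δ (l + 1) ^ α ≤ C ^ 2 * 4 ^ α * ρ ^ α := by
  have h0 := hK.t_pos
  have hδ' := hK.δ_pos (l + 1) (Nat.le_add_left 1 l)
  have hρ : 0 < 2 * ρ := hδ'.trans_le hρl1
  have hball := (hμ y (2 * ρ) hρ ((ENNReal.ofReal_le_ofReal
    (hρl.le.trans (hK.δ_le_δ_one hl))).trans hK.ofReal_δ_one_le_ediam)).2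
  have hpack := hμ.card_mul_rpow_le hC (S := fun i => Cp (l + 1) i ∩ ball y ρ) (half_pos hδ')
    ((ENNReal.ofReal_le_ofReal (by linarith [hK.δ_le_δ_one (Nat.le_add_left 1 l)])).trans
      hK.ofReal_δ_one_le_ediam)
    (fun i hi => (c.mem_levelMeeting.1 hi).2)
    (fun i hi j hj hij x hx y hy => by
      rw [mul_div_cancel₀ _ two_ne_zero]
      exact hK.le_dist _ (Nat.le_add_left 1 l) i (c.level_spec h0 (c.mem_levelMeeting.1 hi).1).1
        j (c.level_spec h0 (c.mem_levelMeeting.1 hj).1).1 hij x hx.1 y hy.1)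
    (fun i _ => (thickening_subset_of_subset _ inter_subset_right).trans
      ((thickening_ball y _ _).trans (ball_subset_ball (by linarith))))
    (ne_top_of_le_ne_top ENNReal.ofReal_ne_top hball)
  have hball' := ENNReal.toReal_le_of_le_ofReal (by positivity) hball
  rw [Real.mul_rpow zero_le_two (by linarith)] at hball'
  rw [Real.div_rpow hδ'.le zero_le_two] at hpack
  have h4 : (4 : ℝ) ^ α = 2 ^ α * 2 ^ α := by
    rw [← Real.mul_rpow zero_le_two zero_le_two]
    norm_num
  have h2 : (0 : ℝ) < 2 ^ α := Real.rpow_pos_of_pos two_pos α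
  rw [mul_div_assoc', div_le_iff₀ h2] at hpack
  calc _ ≤ C * (μ (ball y (2 * ρ))).toReal * 2 ^ α := hpack
    _ ≤ C * (C * (2 ^ α * ρ ^ α)) * 2 ^ α := by gcongr
    _ = C ^ 2 * 4 ^ α * ρ ^ α := by rw [h4]; ring

theorem card_levelMeeting_ball_le (hK : IsCantorScheme t m Cp δ) (c : SubpieceChoice t m Cp)
    (hμ : IsAhlforsRegularWith μ α C) (hC : 0 < C) {θ : ℝ} (hθ0 : 0 ≤ θ) (hθ1 : θ ≤ 1)
    {l : ℕ} (hl : 1 ≤ l)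
    (hE : δ (l + 1) ^ (-(α * θ)) ≤ (∏ i ∈ Finset.Icc 1 l, (m i : ℝ)) * m (l + 1) ^ θ)
    {y : X} {ρ : ℝ} (hρl1 : δ (l + 1) ≤ 2 * ρ) (hρl : 2 * ρ < δ l) (k : ℕ) :
    ((c.levelMeeting (l + 1 + k) (ball y ρ)).card : ℝ) ≤
      (C ^ 2 * 4 ^ α) ^ θ * ρ ^ (α * θ) * ∏ i ∈ Finset.Icc 1 (l + 1 + k), (m i : ℝ) := by
  have h0 := hK.t_pos
  have hδ' := hK.δ_pos (l + 1) (Nat.le_add_left 1 l)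
  have hρ : 0 ≤ ρ := by linarith
  set N := c.levelMeeting (l + 1) (ball y ρ)
  have hdesc : ((c.levelMeeting (l + 1 + k) (ball y ρ)).card : ℝ) ≤
      N.card * ∏ i ∈ Finset.Ioc (l + 1) (l + 1 + k), (m i : ℝ) := by
    exact_mod_cast c.card_levelMeeting_add_le hK.nonempty hK.disjoint h0 (ball y ρ) (l + 1) k
  have hNm : (N.card : ℝ) ≤ m (l + 1) := by
    refine Nat.cast_le.2 (c.card_levelMeeting_succ_le h0 (hK.le_dist l hl) fun x hx x' hx' => ?_)
    linarith [dist_triangle_right x x' y, mem_ball.1 hx, mem_ball.1 hx']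
  have hN := le_rpow_mul_mul_of_le N.card.cast_nonneg hδ' hθ0 hθ1 hNm
    (hK.card_levelMeeting_succ_mul_rpow_le c hμ hC hl hρl1 hρl) hE
  rw [Real.mul_rpow (by positivity) (Real.rpow_nonneg hρ α), ← Real.rpow_mul hρ] at hN
  calc _ ≤ _ := hdesc
    _ ≤ (C ^ 2 * 4 ^ α) ^ θ * ρ ^ (α * θ) * ((∏ i ∈ Finset.Icc 1 l, (m i : ℝ)) * m (l + 1)) *
          ∏ i ∈ Finset.Ioc (l + 1) (l + 1 + k), (m i : ℝ) := by gcongr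
    _ = _ := by
      rw [prod_Icc_one_add_eq_mul_prod_Ioc _ (l + 1) k,
        Finset.prod_Icc_succ_top (Nat.le_add_left 1 l)]
      ring

theorem le_sum_rpow_of_ball_cover (hK : IsCantorScheme t m Cp δ) (c : SubpieceChoice t m Cp)
    (hμ : IsAhlforsRegularWith μ α C) (hC : 0 < C) {θ : ℝ} (hθ0 : 0 ≤ θ) (hθ1 : θ ≤ 1)
    {l₀ : ℕ} (hl₀ : 1 ≤ l₀) (hE : ∀ l, l₀ ≤ l →
      δ (l + 1) ^ (-(α * θ)) ≤ (∏ i ∈ Finset.Icc 1 l, (m i : ℝ)) * m (l + 1) ^ θ)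
    (hδ : Tendsto δ atTop (𝓝 0)) (B : Finset (X × ℝ))
    (hB : ∀ p ∈ B, 0 < p.2 ∧ p.2 ≤ δ l₀ / 4)
    (hcover : (⋂ l, ⋃ i ∈ Finset.range (t l), Cp l i) ⊆ ⋃ p ∈ B, ball p.1 p.2) :
    1 / (C ^ 2 * 4 ^ α) ^ θ ≤ ∑ p ∈ B, p.2 ^ (α * θ) := by
  have h0 := hK.t_pos
  have hlev : ∀ p ∈ B, ∃ l, l₀ ≤ l ∧ δ (l + 1) ≤ 2 * p.2 ∧ 2 * p.2 < δ l := fun p hp =>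
    exists_le_and_succ_le_and_lt (by linarith [hB p hp, hK.δ_pos l₀ hl₀])
      (((hδ.eventually (gt_mem_nhds (by linarith [(hB p hp).1]))).and
        (eventually_gt_atTop l₀)).exists.imp fun _ h => ⟨h.2, h.1.le⟩)
  choose! lev hlev using hlev
  set L := B.sup lev + 1
  set P := ∏ i ∈ Finset.Icc 1 L, (m i : ℝ)
  set count := fun p : X × ℝ => (c.levelMeeting L (ball p.1 p.2)).card
  have hP : 0 < P := Finset.prod_pos fun i hi =>
    Nat.cast_pos.2 (zero_lt_two.trans_le (hK.two_le_m i (Finset.mem_Icc.1 hi).1))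
  have hcount : ∀ p ∈ B, (count p : ℝ) ≤ (C ^ 2 * 4 ^ α) ^ θ * p.2 ^ (α * θ) * P := by
    intro p hp
    obtain ⟨hl₀l, hδρ, hρδ⟩ := hlev p hp
    obtain ⟨k, hk⟩ : ∃ k, L = lev p + 1 + k :=
      ⟨B.sup lev - lev p, by have := Finset.le_sup (f := lev) hp; omega⟩
    have := hK.card_levelMeeting_ball_le c hμ hC hθ0 hθ1 (hl₀.trans hl₀l) (hE _ hl₀l)
      (y := p.1) hδρ hρδ k
    rwa [← hk] at this
  have htotal : P ≤ ∑ p ∈ B, (count p : ℝ) := by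
    have := hK.card_level_le_sum c L B (fun p => ball p.1 p.2) hcover
    rw [c.card_level hK.nonempty hK.disjoint h0] at this
    calc P = ((∏ i ∈ Finset.Icc 1 L, m i : ℕ) : ℝ) := by push_cast; rfl
      _ ≤ ((∑ p ∈ B, count p : ℕ) : ℝ) := Nat.cast_le.2 this
      _ = _ := Nat.cast_sum _ _
  have hK₁ : 0 < (C ^ 2 * 4 ^ α) ^ θ := by positivity
  rw [div_le_iff₀ hK₁]
  refine le_of_mul_le_mul_right ?_ hP
  calc 1 * P ≤ ∑ p ∈ B, (C ^ 2 * 4 ^ α) ^ θ * p.2 ^ (α * θ) * P :=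
        (one_mul P).trans_le (htotal.trans (Finset.sum_le_sum hcount))
    _ = (∑ p ∈ B, p.2 ^ (α * θ)) * (C ^ 2 * 4 ^ α) ^ θ * P := by
        rw [← Finset.sum_mul, ← Finset.mul_sum]
        ring

theorem ofReal_mul_le_dimH [ProperSpace X] (hK : IsCantorScheme t m Cp δ)
    (hμ : IsAhlforsRegularWith μ α C) (hα : 0 < α) (hC : 0 < C) {θ : ℝ} (hθ0 : 0 < θ) (hθ1 : θ ≤ 1)
    (h : ENNReal.ofReal θ < liminf (fun l : ℕ => ENNReal.ofReal
      (Real.log (∏ k ∈ Finset.Icc 1 (l - 1), (m k : ℝ)) / (- Real.log ((m l : ℝ) * δ l ^ α))))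
      atTop) :
    ENNReal.ofReal (α * θ) ≤ dimH (⋂ l, ⋃ i ∈ Finset.range (t l), Cp l i) := by
  obtain ⟨c⟩ := SubpieceChoice.nonempty_of_le_ncard hK.m_le_ncard
  obtain ⟨M, hM⟩ := hK.exists_prod_mul_rpow_le hμ hC
  obtain ⟨l₀, hl₀, hE⟩ := hK.exists_rpow_neg_le hθ0 h
  have hδ : Tendsto δ atTop (𝓝 0) :=
    tendsto_zero_of_mul_rpow_le hα (tendsto_prod_Icc_atTop hK.two_le_m)
      (eventually_atTop.2 ⟨1, fun l hl => (hK.δ_pos l hl).le⟩) (eventually_atTop.2 ⟨1, hM⟩)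
  exact le_dimH_of_forall_finite_ball_cover hK.isCompact_iInter (mul_pos hα hθ0)
    (by positivity) (by linarith [hK.δ_pos l₀ hl₀])
    (hK.le_sum_rpow_of_ball_cover c hμ hC hθ0.le hθ1 hl₀ hE hδ)

end Measure

end IsCantorScheme

theorem cantor_dimension_lower_bound_general
    [MetricSpace X] [ProperSpace X] [MeasurableSpace X] [BorelSpace X]
    (μ : Measure X) (α C₀ : ℝ) (hα : 0 < α) (hC₀ : 0 < C₀)
    (hreg : IsAhlforsRegularWith μ α C₀)
    (t m : ℕ → ℕ) (Cp : ℕ → ℕ → Set X) (δ : ℕ → ℝ)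
    (ht0 : t 0 = 1)
    (hne : ∀ l, ∀ i < t l, (Cp l i).Nonempty)
    (hcpt : ∀ l, ∀ i < t l, IsCompact (Cp l i))
    (hnested : ∀ l, (⋃ i ∈ Finset.range (t (l + 1)), Cp (l + 1) i) ⊆
      ⋃ i ∈ Finset.range (t l), Cp l i)
    (hm : ∀ l, 1 ≤ l → 2 ≤ m l)
    (hcount : ∀ l, ∀ j < t l,
      m (l + 1) ≤ {i | i < t (l + 1) ∧ Cp (l + 1) i ⊆ Cp l j}.ncard)
    (hδpos : ∀ l, 1 ≤ l → 0 < δ l)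
    (hδdec : ∀ l, 1 ≤ l → δ (l + 1) < δ l)
    (hsep : ∀ l, 1 ≤ l → ∀ i < t l, ∀ j < t l, i ≠ j →
      ∀ x ∈ Cp l i, ∀ y ∈ Cp l j, δ l ≤ dist x y) :
    ENNReal.ofReal α *
        liminf (fun l : ℕ => ENNReal.ofReal
          (Real.log (∏ k ∈ Finset.Icc 1 (l - 1), (m k : ℝ)) /
            (- Real.log ((m l : ℝ) * δ l ^ α)))) atTop ≤
      dimH (⋂ l : ℕ, ⋃ i ∈ Finset.range (t l), Cp l i) := by
  have hK : IsCantorScheme t m Cp δ :=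
    ⟨ht0, hne, hcpt, hnested, hm, hcount, hδpos, hδdec, hsep⟩
  obtain ⟨M, hM⟩ := hK.exists_prod_mul_rpow_le hreg hC₀
  have hβ := hK.liminf_le_one hM
  refine ENNReal.mul_le_of_forall_lt fun a ha b hb => ?_
  obtain ⟨θ, hθ, rfl⟩ : ∃ θ : ℝ, 0 ≤ θ ∧ b = ENNReal.ofReal θ :=
    ⟨b.toReal, ENNReal.toReal_nonneg, (ENNReal.ofReal_toReal (hb.trans_le hβ).ne_top).symm⟩
  rcases hθ.eq_or_lt with rfl | hθ0
  · simp
  have hθ1 : θ ≤ 1 := by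
    have := hb.trans_le hβ
    rw [← ENNReal.ofReal_one, ENNReal.ofReal_lt_ofReal_iff'] at this
    exact this.1.le
  calc a * ENNReal.ofReal θ ≤ ENNReal.ofReal α * ENNReal.ofReal θ := mul_le_mul_left ha.le _
    _ = ENNReal.ofReal (α * θ) := (ENNReal.ofReal_mul hα.le).symm
    _ ≤ _ := hK.ofReal_mul_le_dimH hreg hα hC₀ hθ0 hθ1 hb

/-- Mass-distribution lower bound for Cantor-like intersections:
`K l = ⋃_{i < t l} C l i` is a nested decreasing sequence of finite disjoint
unions of nonempty compact sets (`K 0` a single nonempty compact set), each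
piece of `K l` contains at least `m (l+1) ≥ 2` pieces of `K (l+1)`, the maximal
diameter of the pieces of `K l` tends to `0`, and distinct pieces of `K l` are
`δ l`-separated with `0 < δ (l+1) < δ l`.  Then
`dim ⋂ K l ≥ α · liminf log(m 1 ⋯ m (l−1)) / (− log (m l · (δ l)^α))`. -/
theorem cantor_dimension_lower_bound
    [MetricSpace X] [ProperSpace X] [MeasurableSpace X] [BorelSpace X]
    (μ : Measure X) (α C₀ : ℝ) (hα : 0 < α) (hC₀ : 0 < C₀)
    (hreg : IsAhlforsRegularWith μ α C₀)
    (t m : ℕ → ℕ) (Cp : ℕ → ℕ → Set X) (δ : ℕ → ℝ)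
    (ht0 : t 0 = 1)
    (hne : ∀ l, ∀ i < t l, (Cp l i).Nonempty)
    (hcpt : ∀ l, ∀ i < t l, IsCompact (Cp l i))
    (hnested : ∀ l, (⋃ i ∈ Finset.range (t (l + 1)), Cp (l + 1) i) ⊆
      ⋃ i ∈ Finset.range (t l), Cp l i)
    (hm : ∀ l, 1 ≤ l → 2 ≤ m l)
    (hcount : ∀ l, ∀ j < t l,
      m (l + 1) ≤ {i | i < t (l + 1) ∧ Cp (l + 1) i ⊆ Cp l j}.ncard)
    (hdiam : ∀ ε : ℝ, 0 < ε → ∃ L : ℕ, ∀ l, L ≤ l → ∀ i < t l,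
      EMetric.diam (Cp l i) ≤ ENNReal.ofReal ε)
    (hδpos : ∀ l, 1 ≤ l → 0 < δ l)
    (hδdec : ∀ l, 1 ≤ l → δ (l + 1) < δ l)
    (hsep : ∀ l, 1 ≤ l → ∀ i < t l, ∀ j < t l, i ≠ j →
      ∀ x ∈ Cp l i, ∀ y ∈ Cp l j, δ l ≤ dist x y) :
    ENNReal.ofReal α *
        liminf (fun l : ℕ => ENNReal.ofReal
          (Real.log (∏ k ∈ Finset.Icc 1 (l - 1), (m k : ℝ)) /
            (- Real.log ((m l : ℝ) * δ l ^ α)))) atTop ≤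
      dimH (⋂ l : ℕ, ⋃ i ∈ Finset.range (t l), Cp l i) :=
  cantor_dimension_lower_bound_general μ α C₀ hα hC₀ hreg t m Cp δ ht0 hne hcpt hnested hm hcount
    hδpos hδdec hsep
end
end

section
/- Let (X,d,μ) be an α-Ahlfors regular metric measure space containing more than one point, let Q ⊆ X be a countable WDS subset with radius function R : Q → (0,∞), and let ψ : (0,∞) → (0,∞) be a non-decreasing function such that Σ_{ξ∈Q} (ψ(R(ξ))/R(ξ))^α converges. Then ψ(x)/x → 0 as x → 0+. -/
open Metric Filter Set MeasureTheory
open scoped ENNReal NNReal Topology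

noncomputable section

variable {X : Type*}

/-- Lemma: in an `α`-Ahlfors regular space with more than one point, if `(Q,R)` is
WDS, `ψ` is non-decreasing and `Σ_{ξ∈Q} (ψ(R ξ)/R ξ)^α` converges, then
`ψ(x)/x → 0` as `x → 0+`. -/
theorem psi_div_self_tendsto_zero
    [MetricSpace X] [Nontrivial X] [MeasurableSpace X] [BorelSpace X]
    (μ : Measure X) (α C₀ : ℝ) (hα : 0 < α) (hC₀ : 0 < C₀)
    (hreg : IsAhlforsRegularWith μ α C₀)
    (Q : Set X) (hQ : Q.Countable) (R : X → ℝ) (hR : ∀ ξ ∈ Q, 0 < R ξ)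
    (C : ℝ) (hWDS : IsWDS μ α Q R C)
    (ψ : ℝ → ℝ) (hψ : ∀ x : ℝ, 0 < x → 0 < ψ x) (hmono : MonotoneOn ψ (Ioi 0))
    (hsum : Summable fun ξ : Q => (ψ (R ξ.1) / R ξ.1) ^ α) :
    Tendsto (fun x => ψ x / x) (nhdsWithin 0 (Ioi (0 : ℝ))) (nhds 0) := by
  classical
  obtain ⟨hC, _hsep, hdist⟩ := hWDS
  have hC0 : (0 : ℝ) < C := lt_of_lt_of_le one_pos hC
  -- a ball of positive measure
  obtain ⟨η⟩ : Nonempty X := inferInstance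
  have hdiam : 0 < EMetric.diam (univ : Set X) := by
    obtain ⟨a, b, hab⟩ := exists_pair_ne X
    calc (0 : ℝ≥0∞) < edist a b := by simpa [edist_pos] using hab
      _ ≤ EMetric.diam univ := EMetric.edist_le_diam_of_mem (mem_univ a) (mem_univ b)
  obtain ⟨r, hr, hrd⟩ : ∃ r : ℝ, 0 < r ∧ ENNReal.ofReal r ≤ EMetric.diam (univ : Set X) := by
    rcases eq_or_ne (EMetric.diam (univ : Set X)) ⊤ with h | h
    · exact ⟨1, one_pos, by simp [h]⟩
    · exact ⟨(EMetric.diam (univ : Set X)).toReal,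
        ENNReal.toReal_pos (ne_of_gt hdiam) h, by rw [ENNReal.ofReal_toReal h]⟩
  obtain ⟨hlow, hup⟩ := hreg η r hr hrd
  set μB := μ (ball η r) with hμBdef
  have hμBtop : μB ≠ ⊤ := ne_top_of_le_ne_top ENNReal.ofReal_ne_top hup
  have hμBpos : 0 < μB :=
    lt_of_lt_of_le (ENNReal.ofReal_pos.mpr (by positivity)) hlow
  set m := μB.toReal with hmdef
  have hm : 0 < m := ENNReal.toReal_pos hμBpos.ne' hμBtop
  set S := ∑' ξ : Q, (ψ (R ξ.1) / R ξ.1) ^ α with hSdef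
  have hS0 : 0 ≤ S := by
    apply tsum_nonneg
    intro ξ
    exact Real.rpow_nonneg (div_nonneg (hψ _ (hR _ ξ.2)).le (hR _ ξ.2).le) _
  obtain ⟨kB, hkB⟩ := hdist η r hr
  set A := (S * C / m) ^ α⁻¹ with hAdef
  have hSCm : 0 ≤ S * C / m := by positivity
  have hA0 : 0 ≤ A := Real.rpow_nonneg hSCm _
  -- key estimate
  have key : ∀ k : ℕ, kB ≤ k → 1 ≤ k → ψ (1 / (C * k)) * k / C ≤ A / k := by
    intro k hkBk hk1
    have hk0 : (0 : ℝ) < k := by exact_mod_cast hk1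
    obtain ⟨F, hFQ, hFR, _hFball, hFcard⟩ := hkB k hkBk
    set u := 1 / (C * (k : ℝ)) with hudef
    have hu : 0 < u := by positivity
    set b := (ψ u * k / C) ^ α with hbdef
    have hψu : 0 < ψ u := hψ u hu
    have hbase : 0 ≤ ψ u * k / C := by positivity
    have hb0 : 0 ≤ b := Real.rpow_nonneg hbase _
    -- each term of the sum over F is at least b
    have hterm : ∀ ξ ∈ F, b ≤ (ψ (R ξ) / R ξ) ^ α := by
      intro ξ hξ
      obtain ⟨h1, h2⟩ := hFR ξ hξ
      have hRξ : 0 < R ξ := lt_of_lt_of_le hu h1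
      have hψle : ψ u ≤ ψ (R ξ) := hmono hu hRξ h1
      have hdiv : ψ u * k / C ≤ ψ (R ξ) / R ξ := by
        have : ψ u / (C / k) ≤ ψ (R ξ) / R ξ :=
          div_le_div₀ (le_trans hψu.le hψle) hψle hRξ h2
        calc ψ u * k / C = ψ u / (C / k) := by
              rw [div_div_eq_mul_div]
          _ ≤ ψ (R ξ) / R ξ := this
      exact Real.rpow_le_rpow hbase hdiv hα.le
    -- sum over F bounded above by S
    have hFsum : (F.card : ℝ) * b ≤ S := by
      have hinj : Function.Injective (fun x : {x // x ∈ F} => (⟨x.1, hFQ x.2⟩ : Q)) := by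
        intro a b hab
        exact Subtype.ext (by simpa using congrArg Subtype.val hab)
      set F' : Finset Q := F.attach.map ⟨_, hinj⟩ with hF'def
      have hcard : F'.card = F.card := by
        rw [hF'def, Finset.card_map, Finset.card_attach]
      have hsum1 : ∑ ξ ∈ F', (ψ (R ξ.1) / R ξ.1) ^ α = ∑ ξ ∈ F, (ψ (R ξ) / R ξ) ^ α := by
        rw [hF'def, Finset.sum_map]
        exact F.sum_attach fun x => (ψ (R x) / R x) ^ α
      have h1 : ∑ ξ ∈ F', (ψ (R ξ.1) / R ξ.1) ^ α ≤ S :=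
        Summable.sum_le_tsum F' (fun ξ _ =>
          Real.rpow_nonneg (div_nonneg (hψ _ (hR _ ξ.2)).le (hR _ ξ.2).le) _) hsum
      have h2 : (F.card : ℝ) * b ≤ ∑ ξ ∈ F, (ψ (R ξ) / R ξ) ^ α := by
        have := Finset.card_nsmul_le_sum F (fun ξ => (ψ (R ξ) / R ξ) ^ α) b hterm
        simpa [nsmul_eq_mul] using this
      calc (F.card : ℝ) * b ≤ ∑ ξ ∈ F, (ψ (R ξ) / R ξ) ^ α := h2
        _ = ∑ ξ ∈ F', (ψ (R ξ.1) / R ξ.1) ^ α := hsum1.symm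
        _ ≤ S := h1
    -- lower bound for F.card
    have hkα : (0 : ℝ) < (k : ℝ) ^ α := Real.rpow_pos_of_pos hk0 _
    have hcardlb : (k : ℝ) ^ α / C * m ≤ (F.card : ℝ) := by
      have h1 : ENNReal.ofReal ((k : ℝ) ^ α / C * m) ≤ (F.card : ℝ≥0∞) := by
        rw [ENNReal.ofReal_mul (by positivity), hmdef, ENNReal.ofReal_toReal hμBtop]
        exact hFcard
      have h2 := ENNReal.toReal_mono (by simp) h1
      rwa [ENNReal.toReal_ofReal (by positivity), ENNReal.toReal_natCast] at h2
    -- conclude b ≤ (S*C/m) / k^α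
    have hbb : b ≤ (S * C / m) / (k : ℝ) ^ α := by
      have h1 : ((k : ℝ) ^ α / C * m) * b ≤ S := by
        calc ((k : ℝ) ^ α / C * m) * b ≤ (F.card : ℝ) * b :=
              mul_le_mul_of_nonneg_right hcardlb hb0
          _ ≤ S := hFsum
      have hc : (0 : ℝ) < (k : ℝ) ^ α / C * m := by positivity
      have h2 : b ≤ S / ((k : ℝ) ^ α / C * m) := (le_div_iff₀ hc).mpr (by linarith [h1, mul_comm ((k : ℝ) ^ α / C * m) b])
      have h3 : S / ((k : ℝ) ^ α / C * m) = (S * C / m) / (k : ℝ) ^ α := by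
        rw [div_eq_div_iff hc.ne' (by positivity : ((k : ℝ) ^ α) ≠ 0)]
        field_simp
      exact h2.trans_eq h3
    -- convert to the linear bound
    have hAk : ((A / k) : ℝ) ^ α = (S * C / m) / (k : ℝ) ^ α := by
      rw [Real.div_rpow hA0 hk0.le, hAdef, Real.rpow_inv_rpow hSCm hα.ne']
    rw [← Real.rpow_le_rpow_iff hbase (div_nonneg hA0 hk0.le) hα, hAk]
    exact hbb
  -- conclude via squeeze
  set k₁ : ℕ := max kB 2 with hk₁def
  have hk₁2 : (2 : ℕ) ≤ k₁ := le_max_right _ _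
  set δ : ℝ := 1 / (C * ((k₁ : ℝ) + 1)) with hδdef
  have hδ : 0 < δ := by positivity
  have hbound : ∀ x : ℝ, 0 < x → x < δ → ψ x / x ≤ 4 * C ^ 3 * A * x := by
    intro x hx hxδ
    set t : ℝ := 1 / (C * x) with htdef
    have ht0 : 0 < t := by positivity
    have htx : t * (C * x) = 1 := by rw [htdef]; field_simp
    have htk : (k₁ : ℝ) + 1 < t := by
      have h1 : x * (C * ((k₁ : ℝ) + 1)) < 1 :=
        (lt_div_iff₀ (show (0 : ℝ) < C * ((k₁ : ℝ) + 1) by positivity)).mp hxδ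
      rw [htdef, lt_div_iff₀ (by positivity : (0 : ℝ) < C * x)]
      nlinarith
    set k : ℕ := ⌊t⌋₊ with hkdef
    have hkt : (k : ℝ) ≤ t := Nat.floor_le ht0.le
    have htk1 : t < (k : ℝ) + 1 := Nat.lt_floor_add_one t
    have hk₁k : k₁ ≤ k := Nat.le_floor (by push_cast; linarith)
    have hkBk : kB ≤ k := le_trans (le_max_left _ _) hk₁k
    have hk1 : 1 ≤ k := le_trans (by norm_num) (hk₁2.trans hk₁k)
    have hk0 : (0 : ℝ) < (k : ℝ) := by exact_mod_cast hk1
    have ht2 : (2 : ℝ) ≤ t := by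
      have h2 : ((2 : ℕ) : ℝ) ≤ (k₁ : ℝ) := by exact_mod_cast hk₁2
      push_cast at h2; linarith
    have hk_half : t / 2 ≤ (k : ℝ) := by linarith
    have hxu : x ≤ 1 / (C * (k : ℝ)) := by
      rw [le_div_iff₀ (by positivity)]
      have h1 : (k : ℝ) * (C * x) ≤ 1 := by nlinarith
      nlinarith
    have hu : (0 : ℝ) < 1 / (C * (k : ℝ)) := by positivity
    have hkey := key k hkBk hk1
    have hψxu : ψ x ≤ ψ (1 / (C * (k : ℝ))) := hmono hx hu hxu
    have hψu0 : 0 < ψ (1 / (C * (k : ℝ))) := hψ _ hu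
    have hψub : ψ (1 / (C * (k : ℝ))) ≤ A * C / (k : ℝ) ^ 2 := by
      have h1 := mul_le_mul_of_nonneg_right hkey (le_of_lt (div_pos hC0 hk0))
      have h2 : ψ (1 / (C * (k : ℝ))) * (k : ℝ) / C * (C / (k : ℝ)) =
          ψ (1 / (C * (k : ℝ))) := by field_simp
      have h3 : A / (k : ℝ) * (C / (k : ℝ)) = A * C / (k : ℝ) ^ 2 := by
        rw [div_mul_div_comm, sq]
      rw [h2, h3] at h1
      exact h1
    have hxinv : 1 / x ≤ 2 * C * (k : ℝ) := by
      have h1 : 1 / x = C * t := by rw [htdef]; field_simp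
      have h2 : t ≤ 2 * (k : ℝ) := by linarith
      calc 1 / x = C * t := h1
        _ ≤ C * (2 * (k : ℝ)) := mul_le_mul_of_nonneg_left h2 hC0.le
        _ = 2 * C * (k : ℝ) := by ring
    have hkinv : 1 / (k : ℝ) ≤ 2 * C * x := by
      rw [div_le_iff₀ hk0]
      calc (1 : ℝ) = t * (C * x) := htx.symm
        _ ≤ 2 * (k : ℝ) * (C * x) :=
            mul_le_mul_of_nonneg_right (by linarith) (by positivity)
        _ = 2 * C * x * (k : ℝ) := by ring
    calc ψ x / x ≤ ψ (1 / (C * (k : ℝ))) * (1 / x) := by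
          rw [div_eq_mul_one_div]
          exact mul_le_mul_of_nonneg_right hψxu (by positivity)
      _ ≤ (A * C / (k : ℝ) ^ 2) * (2 * C * (k : ℝ)) :=
          mul_le_mul hψub hxinv (by positivity) (by positivity)
      _ = (2 * C ^ 2 * A) * (1 / (k : ℝ)) := by
          field_simp
      _ ≤ (2 * C ^ 2 * A) * (2 * C * x) :=
          mul_le_mul_of_nonneg_left hkinv (by positivity)
      _ = 4 * C ^ 3 * A * x := by ring
  have hg : Tendsto (fun x : ℝ => 4 * C ^ 3 * A * x) (nhdsWithin 0 (Ioi (0 : ℝ))) (nhds 0) := by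
    have h1 : Tendsto (fun x : ℝ => 4 * C ^ 3 * A * x) (nhds 0) (nhds (4 * C ^ 3 * A * 0)) :=
      (continuous_const.mul continuous_id).tendsto 0
    simpa using h1.mono_left nhdsWithin_le_nhds
  refine squeeze_zero' ?_ ?_ hg
  · filter_upwards [self_mem_nhdsWithin] with x hx
    exact div_nonneg (hψ x hx).le (le_of_lt hx)
  · filter_upwards [self_mem_nhdsWithin, Ioo_mem_nhdsGT_of_mem ⟨le_refl (0 : ℝ), hδ⟩] with x hx hxδ
    exact hbound x hx hxδ.2
end
end

section
/- Let Y be a locally compact Hausdorff topological space and let Γ be a countable group acting on Y by homeomorphisms, such that the action is free, proper (for every compact K ⊆ Y the set {g ∈ Γ : g·K ∩ K ≠ ∅} is finite), and the quotient space Γ\Y is compact. Then there exists an open set U ⊆ Y with compact closure F := closure(U) such that ⋃_{g∈Γ} g·F = Y and, for every g ∈ Γ with g ≠ e, the interior of F ∩ g·F is empty (i.e. F is a fundamental domain for the action of Γ on Y). -/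
open Set
open scoped Pointwise

section Aux

variable {Y : Type*} [TopologicalSpace Y]
variable {Γ : Type*} [Group Γ] [MulAction Γ Y] [ContinuousConstSMul Γ Y]

/-- A nice neighborhood: open, compact closure, disjoint from its nontrivial translates. -/
theorem aux_nbhd [LocallyCompactSpace Y] [T2Space Y]
    (hfree : ∀ (g : Γ) (y : Y), g • y = y → g = 1)
    (hproper : ∀ K : Set Y, IsCompact K → {g : Γ | ((g • K) ∩ K).Nonempty}.Finite)
    (y : Y) : ∃ V : Set Y, IsOpen V ∧ y ∈ V ∧ IsCompact (closure V) ∧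
      ∀ g : Γ, g ≠ 1 → Disjoint (g • V) V := by
  classical
  obtain ⟨C, hC, hCy⟩ := exists_compact_mem_nhds (x := y)
  have hSfin : {g : Γ | ((g • C) ∩ C).Nonempty}.Finite := hproper C hC
  set S : Finset Γ := hSfin.toFinset with hS
  have hW : ∀ g : Γ, ∃ W : Set Y, IsOpen W ∧ y ∈ W ∧ (g ≠ 1 → Disjoint (g • W) W) := by
    intro g
    by_cases hg : g = 1
    · exact ⟨univ, isOpen_univ, mem_univ y, fun h => absurd hg h⟩
    · have hne : g • y ≠ y := fun h => hg (hfree g y h)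
      obtain ⟨A, B, hA, hB, hgyA, hyB, hAB⟩ := t2_separation hne
      refine ⟨B ∩ g⁻¹ • A, hB.inter (hA.smul g⁻¹), ⟨hyB, ?_⟩, fun _ => ?_⟩
      · rw [mem_inv_smul_set_iff]; exact hgyA
      · have h1 : g • (B ∩ g⁻¹ • A) ⊆ A := by
          calc g • (B ∩ g⁻¹ • A) ⊆ g • (g⁻¹ • A) := smul_set_mono inter_subset_right
          _ = A := smul_inv_smul g A
        exact Disjoint.mono h1 inter_subset_left hAB
  choose W hWopen hWmem hWdisj using hW
  refine ⟨interior C ∩ ⋂ g ∈ S, W g, isOpen_interior.inter (isOpen_biInter_finset fun g _ => hWopen g),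
    ⟨mem_interior_iff_mem_nhds.2 hCy, mem_iInter₂.2 fun g _ => hWmem g⟩, ?_, ?_⟩
  · exact IsCompact.of_isClosed_subset hC isClosed_closure
      (closure_minimal (inter_subset_left.trans interior_subset) hC.isClosed)
  · intro g hg
    by_cases hgS : g ∈ S
    · have h1 : interior C ∩ ⋂ g ∈ S, W g ⊆ W g :=
        inter_subset_right.trans (iInter₂_subset g hgS)
      exact (hWdisj g hg).mono (smul_set_mono h1) h1
    · have hgC : ¬ ((g • C) ∩ C).Nonempty := by
        intro h; exact hgS (hS ▸ hSfin.mem_toFinset.2 h)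
      rw [not_nonempty_iff_eq_empty] at hgC
      have h1 : interior C ∩ ⋂ g ∈ S, W g ⊆ C := inter_subset_left.trans interior_subset
      refine Disjoint.mono (smul_set_mono h1) h1 (disjoint_iff_inter_eq_empty.2 hgC)

/-- The saturation of a compact set under a proper action is closed. -/
theorem aux_closed [LocallyCompactSpace Y] [T2Space Y]
    (hproper : ∀ K : Set Y, IsCompact K → {g : Γ | ((g • K) ∩ K).Nonempty}.Finite)
    {C : Set Y} (hC : IsCompact C) : IsClosed (⋃ g : Γ, g • C) := by
  classical
  refine isClosed_of_closure_subset fun y hy => ?_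
  obtain ⟨N, hN, hNy⟩ := exists_compact_mem_nhds (x := y)
  have hSfin : {g : Γ | ((g • (C ∪ N)) ∩ (C ∪ N)).Nonempty}.Finite := hproper _ (hC.union hN)
  have key : y ∈ closure (⋃ g ∈ hSfin.toFinset, g • C) := by
    rw [mem_closure_iff_nhds]
    intro t ht
    have htN : t ∩ N ∈ nhds y := Filter.inter_mem ht hNy
    obtain ⟨z, hz1, hz2⟩ := mem_closure_iff_nhds.1 hy (t ∩ N) htN
    obtain ⟨g, hzg⟩ := mem_iUnion.1 hz2
    have hgS : g ∈ hSfin.toFinset := by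
      refine hSfin.mem_toFinset.2 ⟨z, ?_, Or.inr hz1.2⟩
      exact smul_set_mono subset_union_left hzg
    exact ⟨z, hz1.1, mem_biUnion hgS hzg⟩
  have hclosed : IsClosed (⋃ g ∈ hSfin.toFinset, g • C) :=
    (hSfin.toFinset.isCompact_biUnion fun g _ => hC.smul g).isClosed
  have := hclosed.closure_subset key
  obtain ⟨g, -, hg⟩ := mem_iUnion₂.1 this
  exact mem_iUnion.2 ⟨g, hg⟩

/-- Disjointification of a sequence of invariant open sets. -/
theorem aux_seq (O : ℕ → Set Y) (hO : ∀ k, IsOpen (O k))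
    (hOinv : ∀ (g : Γ) (k), g • O k = O k) :
    ∃ B : ℕ → Set Y,
      (∀ k, IsOpen (B k)) ∧ (∀ k, B k ⊆ O k) ∧
      (∀ j k, j ≠ k → Disjoint (B j) (B k)) ∧
      (∀ k, O k ⊆ ⋃ j, closure (B j)) ∧
      (∀ (g : Γ) (k), g • B k = B k) := by
  classical
  let E : ℕ → Set Y := fun k => Nat.rec (∅ : Set Y) (fun m Em => Em ∪ (O m \ closure Em)) k
  let B : ℕ → Set Y := fun k => O k \ closure (E k)
  have hE0 : E 0 = ∅ := rfl
  have hEsucc : ∀ k, E (k + 1) = E k ∪ B k := fun k => rfl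
  have hEinv : ∀ (g : Γ) (k), g • E k = E k := by
    intro g k
    induction k with
    | zero => rw [hE0]; exact smul_set_empty
    | succ m ih =>
      rw [hEsucc, smul_set_union, ih, smul_set_sdiff, hOinv, ← closure_smul, ih]
  have hBinv : ∀ (g : Γ) (k), g • B k = B k := by
    intro g k
    show g • (O k \ closure (E k)) = O k \ closure (E k)
    rw [smul_set_sdiff, hOinv, ← closure_smul, hEinv]
  have hEmono : ∀ {j k : ℕ}, j ≤ k → E j ⊆ E k := by
    intro j k hjk
    induction k with
    | zero => rw [Nat.le_zero.1 hjk]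
    | succ m ih =>
      rcases Nat.lt_or_ge j (m + 1) with h | h
      · exact (ih (Nat.lt_succ_iff.1 h)).trans (by rw [hEsucc]; exact subset_union_left)
      · rw [Nat.le_antisymm hjk h]
  have hBE : ∀ k, B k ⊆ E (k + 1) := fun k => by rw [hEsucc]; exact subset_union_right
  have hBdisj : ∀ j k : ℕ, j < k → Disjoint (B j) (B k) := by
    intro j k hjk
    have h1 : B j ⊆ closure (E k) :=
      (hBE j).trans ((hEmono hjk).trans subset_closure)
    have h2 : Disjoint (closure (E k)) (B k) := disjoint_sdiff_right
    exact (h2.mono_left h1)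
  have hEclosure : ∀ k, closure (E k) ⊆ ⋃ j, closure (B j) := by
    intro k
    induction k with
    | zero => rw [hE0, closure_empty]; exact empty_subset _
    | succ m ih =>
      rw [hEsucc, closure_union]
      exact union_subset ih (subset_iUnion (fun j => closure (B j)) m)
  refine ⟨B, fun k => (hO k).sdiff isClosed_closure, fun k => diff_subset, ?_, ?_, hBinv⟩
  · intro j k hjk
    rcases Nat.lt_or_ge j k with h | h
    · exact hBdisj j k h
    · exact (hBdisj k j (lt_of_le_of_ne h (Ne.symm hjk))).symm
  · intro k x hx
    by_cases hxE : x ∈ closure (E k)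
    · exact hEclosure k hxE
    · exact mem_iUnion.2 ⟨k, subset_closure ⟨hx, hxE⟩⟩

end Aux

/-- Remark: a countable group acting freely, properly, and cocompactly by
homeomorphisms on a locally compact Hausdorff space admits a fundamental
domain `F = closure U` with `U` open: the translates of `F` cover `Y`
and distinct translates of `F` have empty-interior overlap. -/
theorem exists_fundamental_domain
    {Y : Type*} [TopologicalSpace Y] [LocallyCompactSpace Y] [T2Space Y]
    {Γ : Type*} [Group Γ] [Countable Γ] [MulAction Γ Y] [ContinuousConstSMul Γ Y]
    (hfree : ∀ (g : Γ) (y : Y), g • y = y → g = 1)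
    (hproper : ∀ K : Set Y, IsCompact K → {g : Γ | ((g • K) ∩ K).Nonempty}.Finite)
    (hcocompact : CompactSpace (Quotient (MulAction.orbitRel Γ Y))) :
    ∃ U : Set Y, IsOpen U ∧ IsCompact (closure U) ∧
      (⋃ g : Γ, g • closure U) = univ ∧
      ∀ g : Γ, g ≠ 1 → interior (closure U ∩ g • closure U) = ∅ := by
  classical
  choose V hVopen hVmem hVcl hVdisj using aux_nbhd hfree hproper
  -- the quotient map
  set p : Y → Quotient (MulAction.orbitRel Γ Y) := Quotient.mk (MulAction.orbitRel Γ Y) with hp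
  have hsat : ∀ s : Set Y, p ⁻¹' (p '' s) = ⋃ g : Γ, g • s := by
    intro s
    ext z
    simp only [mem_preimage, mem_image, mem_iUnion]
    constructor
    · rintro ⟨w, hw, hpw⟩
      have hrel : w ∈ MulAction.orbit Γ z := Quotient.exact hpw
      obtain ⟨g, rfl⟩ := hrel
      exact ⟨g⁻¹, _, hw, inv_smul_smul g z⟩
    · rintro ⟨g, w, hw, rfl⟩
      refine ⟨w, hw, Quotient.sound (MulAction.orbitRel_apply.mpr ?_)⟩
      exact MulAction.mem_orbit_iff.mpr ⟨g⁻¹, inv_smul_smul g w⟩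
  have hopen : ∀ s : Set Y, IsOpen s → IsOpen (p '' s) := by
    intro s hs
    rw [← isQuotientMap_quotient_mk'.isOpen_preimage]
    show IsOpen (p ⁻¹' (p '' s))
    rw [hsat]
    exact isOpen_iUnion fun g => hs.smul g
  -- finite subcover
  have hcover : (univ : Set (Quotient (MulAction.orbitRel Γ Y))) ⊆ ⋃ y : Y, p '' V y := by
    intro x _
    obtain ⟨y, rfl⟩ := Quotient.exists_rep x
    exact mem_iUnion.2 ⟨y, mem_image_of_mem p (hVmem y)⟩
  obtain ⟨t, ht⟩ := isCompact_univ.elim_finite_subcover (fun y : Y => p '' V y)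
    (fun y => hopen _ (hVopen y)) hcover
  set n : ℕ := t.card with hn
  set Wk : ℕ → Set Y := fun k => if h : k < n then V ((t.equivFin.symm ⟨k, h⟩ : { x // x ∈ t }) : Y) else ∅
    with hWk
  have hWopen : ∀ k, IsOpen (Wk k) := by
    intro k; rw [hWk]; dsimp only; split
    · exact hVopen _
    · exact isOpen_empty
  have hWcl : ∀ k, IsCompact (closure (Wk k)) := by
    intro k; rw [hWk]; dsimp only; split
    · exact hVcl _
    · rw [closure_empty]; exact isCompact_empty
  have hWdisj : ∀ k, ∀ g : Γ, g ≠ 1 → Disjoint (g • Wk k) (Wk k) := by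
    intro k g hg; rw [hWk]; dsimp only; split
    · exact hVdisj _ g hg
    · rw [smul_set_empty]; exact disjoint_bot_left
  have hWcover : ∀ z : Y, ∃ k, k < n ∧ ∃ g : Γ, z ∈ g • Wk k := by
    intro z
    have := ht (mem_univ (p z))
    obtain ⟨y, hyt, hzy⟩ := mem_iUnion₂.1 this
    have : z ∈ p ⁻¹' (p '' V y) := hzy
    rw [hsat] at this
    obtain ⟨g, hg⟩ := mem_iUnion.1 this
    refine ⟨(t.equivFin ⟨y, hyt⟩ : Fin n).val, (t.equivFin ⟨y, hyt⟩).isLt, g, ?_⟩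
    rw [hWk]; dsimp only
    rw [dif_pos (t.equivFin ⟨y, hyt⟩).isLt]
    have : (⟨(t.equivFin ⟨y, hyt⟩ : Fin n).val, (t.equivFin ⟨y, hyt⟩).isLt⟩ : Fin n)
        = t.equivFin ⟨y, hyt⟩ := Fin.eta _ _
    rw [this, Equiv.symm_apply_apply]
    exact hg
  -- invariant open sets
  set O : ℕ → Set Y := fun k => ⋃ g : Γ, g • Wk k with hO
  have hOopen : ∀ k, IsOpen (O k) := fun k => isOpen_iUnion fun g => (hWopen k).smul g
  have hOinv : ∀ (g : Γ) (k), g • O k = O k := by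
    intro g k
    apply Subset.antisymm
    · rintro z ⟨w, hw, rfl⟩
      obtain ⟨h, hwh⟩ := mem_iUnion.1 hw
      exact mem_iUnion.2 ⟨g * h, by rw [mul_smul]; exact smul_mem_smul_set hwh⟩
    · intro z hz
      obtain ⟨h, hzh⟩ := mem_iUnion.1 hz
      have : z ∈ g • ((g⁻¹ * h) • Wk k) := by
        rw [mul_smul, smul_inv_smul]; exact hzh
      exact smul_set_mono (subset_iUnion (fun g' : Γ => g' • Wk k) (g⁻¹ * h)) this
  obtain ⟨B, hBopen, hBO, hBdisj, hBcov, hBinv⟩ := aux_seq O hOopen hOinv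
  -- the fundamental domain
  refine ⟨⋃ k < n, B k ∩ Wk k, isOpen_biUnion fun k _ => (hBopen k).inter (hWopen k), ?_, ?_, ?_⟩
  · rw [closure_iUnion₂_lt_nat]
    exact (finite_lt_nat n).isCompact_biUnion fun k _ =>
      IsCompact.of_isClosed_subset (hWcl k) isClosed_closure (closure_mono inter_subset_right)
  · apply eq_univ_of_forall
    intro z
    obtain ⟨k, hkn, g, hzg⟩ := hWcover z
    have hzO : z ∈ O k := mem_iUnion.2 ⟨g, hzg⟩
    obtain ⟨j, hzj⟩ := mem_iUnion.1 (hBcov k hzO)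
    -- j must satisfy B j nonempty; show closure B j ⊆ ⋃ g, g • closure (B j ∩ Wk j)
    have hjn : j < n := by
      by_contra hjge
      have : Wk j = ∅ := by rw [hWk]; exact dif_neg hjge
      have hOj : O j = ∅ := by
        rw [hO]; dsimp only; rw [this]
        simp [smul_set_empty]
      have : B j = ∅ := eq_empty_of_subset_empty (hOj ▸ hBO j)
      rw [this, closure_empty] at hzj
      exact hzj
    have hTclosed : IsClosed (⋃ g : Γ, g • closure (B j ∩ Wk j)) :=
      aux_closed hproper
        (IsCompact.of_isClosed_subset (hWcl j) isClosed_closure (closure_mono inter_subset_right))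
    have hBsub : B j ⊆ ⋃ g : Γ, g • closure (B j ∩ Wk j) := by
      intro x hx
      obtain ⟨h, hxh⟩ := mem_iUnion.1 (hBO j hx)
      have hx2 : h⁻¹ • x ∈ B j := by rw [← hBinv h⁻¹ j]; exact smul_mem_smul_set hx
      have hx3 : h⁻¹ • x ∈ Wk j := by
        rwa [mem_smul_set_iff_inv_smul_mem] at hxh
      refine mem_iUnion.2 ⟨h, ?_⟩
      have : h⁻¹ • x ∈ closure (B j ∩ Wk j) := subset_closure ⟨hx2, hx3⟩
      rw [mem_smul_set_iff_inv_smul_mem]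
      exact this
    have hzT : z ∈ ⋃ g : Γ, g • closure (B j ∩ Wk j) :=
      (closure_minimal hBsub hTclosed) hzj
    obtain ⟨g', hzg'⟩ := mem_iUnion.1 hzT
    refine mem_iUnion.2 ⟨g', smul_set_mono (closure_mono ?_) hzg'⟩
    exact subset_biUnion_of_mem (u := fun k => B k ∩ Wk k) hjn
  · intro g hg
    by_contra hne
    obtain ⟨x, hx⟩ := nonempty_iff_ne_empty.2 hne
    set U : Set Y := ⋃ k < n, B k ∩ Wk k with hU
    have hxU : x ∈ closure U := interior_subset hx |>.1
    have hWo : IsOpen (interior (closure U ∩ g • closure U)) := isOpen_interior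
    obtain ⟨y, hyWo, hyU⟩ := mem_closure_iff.1 hxU _ hWo hx
    obtain ⟨k, hkn, hyk⟩ := mem_iUnion₂.1 hyU
    -- shrink to open set inside B k ∩ Wk k
    have hWo2 : IsOpen (interior (closure U ∩ g • closure U) ∩ (B k ∩ Wk k)) :=
      hWo.inter ((hBopen k).inter (hWopen k))
    have hyWo2 : y ∈ interior (closure U ∩ g • closure U) ∩ (B k ∩ Wk k) := ⟨hyWo, hyk⟩
    have hygU : y ∈ closure (g • U) := by
      rw [closure_smul]
      exact (interior_subset hyWo).2
    obtain ⟨z, hz1, hz2⟩ := mem_closure_iff.1 hygU _ hWo2 hyWo2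
    -- z ∈ B k ∩ Wk k and z ∈ g • U
    obtain ⟨w, hw, rfl⟩ := hz2
    obtain ⟨j, hjn', hwj⟩ := mem_iUnion₂.1 hw
    have hz_in : g • w ∈ B k ∩ Wk k := hz1.2
    have hgwBj : g • w ∈ B j := by rw [← hBinv g j]; exact smul_mem_smul_set hwj.1
    have hkj : k = j := by
      by_contra hkj
      exact (hBdisj k j hkj).ne_of_mem hz_in.1 hgwBj rfl
    subst hkj
    have : g • w ∈ (g • Wk k) ∩ Wk k := ⟨smul_mem_smul_set hwj.2, hz_in.2⟩
    exact (hWdisj k g hg).ne_of_mem this.1 this.2 rfl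
end
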